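/- arXiv:1507.07182 — 11 statements merged into one kernel-verified Lean document; each statement's English description precedes it below -/
import Mathlib

section
/- If ω is a finite positive Borel measure on [0,1) whose tail ω̂ is doubling (ω̂(r) ≤ C·ω̂((1+r)/2) for all r), then there exist constants C' > 0 and γ > 0 such that ∫₀ᵗ ((1-t)/(1-s))^γ dω(s) ≤ C'·ω̂(t) for all 0 ≤ t < 1. -/
open MeasureTheory Set
open scoped ENNReal

/-!
Iterating the doubling condition `n` times gives `ω̂(1 - 2ⁿ(1 - t)) ≤ Cⁿ ω̂(t)`. Split `[0, t)`
into the dyadic annuli `2ⁿ(1 - t) ≤ 1 - s < 2ⁿ⁺¹(1 - t)`: there the integrand is at most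
`2^(-nγ)` and the annulus has measure at most `Cⁿ⁺¹ ω̂(t)`, so the integral is bounded by the
geometric series `C ω̂(t) ∑ (2^(-γ) C)ⁿ`, which converges as soon as `2^γ > C`.
-/

def IsTailDoubling (ω : Measure ℝ) (c : ℝ≥0∞) : Prop :=
  ∀ r : ℝ, 0 ≤ r → r < 1 → ω (Ico r 1) ≤ c * ω (Ico ((1 + r) / 2) 1)

def dyadicAnnulus (t : ℝ) (n : ℕ) : Set ℝ :=
  Ico 0 t ∩ Ioc (1 - 2 ^ (n + 1) * (1 - t)) (1 - 2 ^ n * (1 - t))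

theorem Ico_subset_iUnion_dyadicAnnulus {t : ℝ} (ht1 : t < 1) :
    Ico 0 t ⊆ ⋃ n, dyadicAnnulus t n := by
  intro s hs
  have h1t : 0 < 1 - t := by linarith
  obtain ⟨n, hn, hn1⟩ := exists_nat_pow_near (x := (1 - s) / (1 - t)) (y := (2 : ℝ))
    ((one_le_div h1t).2 (by linarith [hs.2])) one_lt_two
  rw [le_div_iff₀ h1t] at hn
  rw [div_lt_iff₀ h1t] at hn1
  exact mem_iUnion.2 ⟨n, hs, by linarith, by linarith⟩

theorem rpow_le_of_mem_dyadicAnnulus {t s γ : ℝ} {n : ℕ} (ht1 : t < 1) (hγ : 0 ≤ γ)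
    (hs : s ∈ dyadicAnnulus t n) : ((1 - t) / (1 - s)) ^ γ ≤ ((2 : ℝ) ^ (-γ)) ^ n := by
  obtain ⟨⟨-, hst⟩, -, hs⟩ := hs
  have h1t : 0 < 1 - t := by linarith
  have hratio : (1 - t) / (1 - s) ≤ (2 ^ n)⁻¹ := by
    rw [div_le_iff₀ (by linarith), inv_mul_eq_div, le_div_iff₀ (by positivity)]
    linarith
  calc ((1 - t) / (1 - s)) ^ γ ≤ ((2 ^ n)⁻¹ : ℝ) ^ γ :=
        Real.rpow_le_rpow (div_nonneg h1t.le (by linarith)) hratio hγ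
    _ = ((2 : ℝ) ^ (-γ)) ^ n := by
        rw [Real.inv_rpow (by positivity), ← Real.rpow_pow_comm zero_le_two,
          Real.rpow_neg zero_le_two, inv_pow]

section Doubling

variable {ω : Measure ℝ} {c : ℝ≥0∞}

theorem measure_Ico_le_pow_mul_of_doubling (hdoub : IsTailDoubling ω c) (n : ℕ) {r : ℝ}
    (hr0 : 0 ≤ r) (hr1 : r < 1) : ω (Ico r 1) ≤ c ^ n * ω (Ico (1 - (1 - r) / 2 ^ n) 1) := by
  induction n with
  | zero => simp
  | succ n ih =>
    have hδ : 0 < (1 - r) / 2 ^ n := by apply div_pos <;> [linarith; positivity]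
    have hδ_le : (1 - r) / 2 ^ n ≤ 1 - r := div_le_self (by linarith) (one_le_pow₀ one_le_two)
    have hmid : (1 + (1 - (1 - r) / 2 ^ n)) / 2 = 1 - (1 - r) / 2 ^ (n + 1) := by
      field_simp; ring
    calc ω (Ico r 1) ≤ c ^ n * ω (Ico (1 - (1 - r) / 2 ^ n) 1) := ih
      _ ≤ c ^ n * (c * ω (Ico (1 - (1 - r) / 2 ^ (n + 1)) 1)) := by
          rw [← hmid]; gcongr; exact hdoub _ (by linarith) (by linarith)
      _ = c ^ (n + 1) * ω (Ico (1 - (1 - r) / 2 ^ (n + 1)) 1) := by ring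

theorem measure_Ico_inter_Ioi_le_of_doubling (hdoub : IsTailDoubling ω c) (n : ℕ) {t : ℝ}
    (ht1 : t < 1) :
    ω (Ico 0 1 ∩ Ioi (1 - 2 ^ n * (1 - t))) ≤ c ^ n * ω (Ico t 1) := by
  set r := max 0 (1 - 2 ^ n * (1 - t))
  have hpos : 0 < (2 : ℝ) ^ n * (1 - t) := mul_pos (by positivity) (by linarith)
  have hr1 : r < 1 := max_lt one_pos (by linarith)
  have ht : t ≤ 1 - (1 - r) / 2 ^ n := by
    have : 1 - r ≤ 2 ^ n * (1 - t) := by linarith [le_max_right 0 (1 - 2 ^ n * (1 - t))]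
    have : (1 - r) / 2 ^ n ≤ 1 - t := by rw [div_le_iff₀ (by positivity)]; linarith
    linarith
  calc ω (Ico 0 1 ∩ Ioi (1 - 2 ^ n * (1 - t))) ≤ ω (Ico r 1) :=
        measure_mono fun s ⟨⟨hs0, hs1⟩, hs⟩ ↦ ⟨max_le hs0 (le_of_lt hs), hs1⟩
    _ ≤ c ^ n * ω (Ico (1 - (1 - r) / 2 ^ n) 1) :=
        measure_Ico_le_pow_mul_of_doubling hdoub n (le_max_left _ _) hr1
    _ ≤ c ^ n * ω (Ico t 1) := by gcongr

theorem measure_dyadicAnnulus_le_of_doubling (hdoub : IsTailDoubling ω c) (n : ℕ) {t : ℝ}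
    (ht1 : t < 1) : ω (dyadicAnnulus t n) ≤ c ^ (n + 1) * ω (Ico t 1) := by
  refine (measure_mono ?_).trans (measure_Ico_inter_Ioi_le_of_doubling hdoub (n + 1) ht1)
  exact fun s ⟨⟨hs0, hst⟩, hs, _⟩ ↦ ⟨⟨hs0, hst.trans ht1⟩, hs⟩

theorem lintegral_rpow_le_of_doubling (hdoub : IsTailDoubling ω c) {γ : ℝ} (hγ : 0 ≤ γ)
    {t : ℝ} (ht1 : t < 1) :
    ∫⁻ s in Ico 0 t, ENNReal.ofReal (((1 - t) / (1 - s)) ^ γ) ∂ω ≤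
      c * (1 - ENNReal.ofReal (2 ^ (-γ)) * c)⁻¹ * ω (Ico t 1) := by
  set q := ENNReal.ofReal (2 ^ (-γ))
  calc ∫⁻ s in Ico 0 t, ENNReal.ofReal (((1 - t) / (1 - s)) ^ γ) ∂ω
      ≤ ∫⁻ s in ⋃ n, dyadicAnnulus t n, ENNReal.ofReal (((1 - t) / (1 - s)) ^ γ) ∂ω :=
        lintegral_mono_set (Ico_subset_iUnion_dyadicAnnulus ht1)
    _ ≤ ∑' n, ∫⁻ s in dyadicAnnulus t n, ENNReal.ofReal (((1 - t) / (1 - s)) ^ γ) ∂ω :=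
        lintegral_iUnion_le _ _
    _ ≤ ∑' n : ℕ, q ^ n * (c ^ (n + 1) * ω (Ico t 1)) := by
        refine ENNReal.tsum_le_tsum fun n ↦ ?_
        calc ∫⁻ s in dyadicAnnulus t n, ENNReal.ofReal (((1 - t) / (1 - s)) ^ γ) ∂ω
            ≤ ∫⁻ _ in dyadicAnnulus t n, q ^ n ∂ω := by
              refine setLIntegral_mono measurable_const fun s hs ↦ ?_
              rw [← ENNReal.ofReal_pow (by positivity)]
              exact ENNReal.ofReal_le_ofReal (rpow_le_of_mem_dyadicAnnulus ht1 hγ hs)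
          _ = q ^ n * ω (dyadicAnnulus t n) := setLIntegral_const _ _
          _ ≤ q ^ n * (c ^ (n + 1) * ω (Ico t 1)) := by
              gcongr; exact measure_dyadicAnnulus_le_of_doubling hdoub n ht1
    _ = c * (1 - q * c)⁻¹ * ω (Ico t 1) := by
        simp_rw [pow_succ, ← ENNReal.tsum_geometric, ← ENNReal.tsum_mul_left,
          ← ENNReal.tsum_mul_right, mul_pow]
        congr 1; funext n; ring

end Doubling

theorem isTailDoubling_ofReal {ω : Measure ℝ} [IsFiniteMeasure ω] {C : ℝ} (hC : 0 ≤ C)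
    (hdoub : ∀ r : ℝ, 0 ≤ r → r < 1 →
      (ω (Ico r 1)).toReal ≤ C * (ω (Ico ((1 + r) / 2) 1)).toReal) :
    IsTailDoubling ω (ENNReal.ofReal C) := fun r hr0 hr1 ↦ by
  rw [← ENNReal.toReal_le_toReal (measure_ne_top _ _) (by finiteness), ENNReal.toReal_mul,
    ENNReal.toReal_ofReal hC]
  exact hdoub r hr0 hr1

theorem stmt_2 (ω : Measure ℝ) [IsFiniteMeasure ω] (C : ℝ) (hC : 1 ≤ C)
    (hdoub : ∀ r : ℝ, 0 ≤ r → r < 1 →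
      (ω (Ico r 1)).toReal ≤ C * (ω (Ico ((1 + r) / 2) 1)).toReal) :
    ∃ C' : ℝ, 0 < C' ∧ ∃ γ : ℝ, 0 < γ ∧ ∀ t : ℝ, 0 ≤ t → t < 1 →
      (∫ s in Ico (0 : ℝ) t, ((1 - t) / (1 - s)) ^ γ ∂ω) ≤ C' * (ω (Ico t 1)).toReal := by
  have hC0 : 0 < C := by linarith
  set γ := Real.logb 2 C + 1
  have hγ : 0 < γ := by linarith [Real.logb_nonneg one_lt_two hC]
  -- `2 ^ γ = 2 * C`, so the dyadic series is geometric with ratio `1 / 2`.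
  have hratio : ENNReal.ofReal (2 ^ (-γ)) * ENNReal.ofReal C = 2⁻¹ := by
    rw [← ENNReal.ofReal_mul (by positivity), Real.rpow_neg zero_le_two,
      Real.rpow_add two_pos, Real.rpow_logb two_pos (by norm_num) hC0, Real.rpow_one,
      mul_inv_rev, inv_mul_cancel_right₀ hC0.ne', ENNReal.ofReal_inv_of_pos two_pos,
      ENNReal.ofReal_ofNat]
  refine ⟨2 * C, by positivity, γ, hγ, fun t _ ht1 ↦ ?_⟩
  have hlint := lintegral_rpow_le_of_doubling (isTailDoubling_ofReal hC0.le hdoub) hγ.le ht1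
  rw [hratio, ENNReal.one_sub_inv_two, inv_inv] at hlint
  have hnonneg : 0 ≤ᵐ[ω.restrict (Ico 0 t)] fun s ↦ ((1 - t) / (1 - s)) ^ γ := by
    filter_upwards [ae_restrict_mem measurableSet_Ico] with s hs
    exact Real.rpow_nonneg (div_nonneg (by linarith) (by linarith [hs.2])) γ
  rw [integral_eq_lintegral_of_nonneg_ae hnonneg (by fun_prop : Measurable _).aestronglyMeasurable]
  calc _ ≤ (ENNReal.ofReal C * 2 * ω (Ico t 1)).toReal :=
        ENNReal.toReal_mono (by finiteness) hlint
    _ = 2 * C * (ω (Ico t 1)).toReal := by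
      rw [ENNReal.toReal_mul, ENNReal.toReal_mul, ENNReal.toReal_ofReal hC0.le,
        ENNReal.toReal_ofNat, mul_comm C]
end

section
/- If ω is a finite positive Borel measure on [0,1) such that for some C > 0 and γ > 0 one has ∫₀ᵗ ((1-t)/(1-s))^γ dω(s) ≤ C·ω̂(t) for all 0 ≤ t < 1, then ((1-t)/(1-r))^γ · ω̂(r) ≤ (C+1)·ω̂(t) for all 0 ≤ r ≤ t < 1; in particular ω̂ is doubling. -/
open MeasureTheory Set

/-!
On `[r, t)` the weight `((1 - t) / (1 - s)) ^ γ` is at least its value at `s = r`, so the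
hypothesis bounds `((1 - t) / (1 - r)) ^ γ · ω([r, t))` by `C · ω̂(t)`; the remaining part
`ω([t, 1))` of `ω̂(r)` carries a factor at most `1`. Taking `t = (1 + r) / 2` makes the factor
`2 ^ (-γ)`, which gives doubling.
-/

section Weight

variable {γ r s t : ℝ}

lemma rpow_one_sub_div_one_sub_le_one (hγ : 0 ≤ γ) (hst : s ≤ t) (ht : t < 1) :
    ((1 - t) / (1 - s)) ^ γ ≤ 1 :=
  Real.rpow_le_one (div_nonneg (by linarith) (by linarith))
    (div_le_one_of_le₀ (by linarith) (by linarith)) hγ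

lemma rpow_one_sub_div_one_sub_le_of_le (hγ : 0 ≤ γ) (hrs : r ≤ s) (hst : s ≤ t)
    (ht : t < 1) :
    ((1 - t) / (1 - r)) ^ γ ≤ ((1 - t) / (1 - s)) ^ γ :=
  Real.rpow_le_rpow (div_nonneg (by linarith) (by linarith))
    (div_le_div_of_nonneg_left (by linarith) (by linarith) (by linarith)) hγ

lemma integrableOn_rpow_one_sub_div_one_sub (ω : Measure ℝ) [IsFiniteMeasure ω] (hγ : 0 ≤ γ)
    (a : ℝ) (ht : t < 1) :
    IntegrableOn (fun s ↦ ((1 - t) / (1 - s)) ^ γ) (Ico a t) ω := by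
  refine Measure.integrableOn_of_bounded (M := 1) (measure_ne_top ω _)
    (by fun_prop : Measurable fun s : ℝ ↦ ((1 - t) / (1 - s)) ^ γ).aestronglyMeasurable ?_
  filter_upwards [ae_restrict_mem measurableSet_Ico] with s hs
  have h1s : 0 ≤ 1 - s := by linarith [hs.2]
  rw [Real.norm_eq_abs, abs_of_nonneg (Real.rpow_nonneg (div_nonneg (by linarith) h1s) γ)]
  exact rpow_one_sub_div_one_sub_le_one hγ hs.2.le ht

end Weight

lemma mul_measureReal_le_setIntegral_of_subset {α : Type*} [MeasurableSpace α] {μ : Measure α}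
    [IsFiniteMeasure μ] {f : α → ℝ} {s t : Set α} {c : ℝ} (hst : s ⊆ t)
    (hs : MeasurableSet s) (ht : MeasurableSet t) (hf : IntegrableOn f t μ) (hf0 : ∀ x ∈ t, 0 ≤ f x)
    (hcf : ∀ x ∈ s, c ≤ f x) :
    c * μ.real s ≤ ∫ x in t, f x ∂μ :=
  calc c * μ.real s = ∫ _ in s, c ∂μ := by rw [setIntegral_const, smul_eq_mul, mul_comm]
    _ ≤ ∫ x in s, f x ∂μ :=
      setIntegral_mono_on (integrableOn_const (measure_ne_top μ _)) (hf.mono_set hst) hs hcf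
    _ ≤ ∫ x in t, f x ∂μ :=
      setIntegral_mono_set hf (ae_restrict_of_forall_mem ht hf0) (Filter.Eventually.of_forall hst)

lemma rpow_mul_measureReal_Ico_le (ω : Measure ℝ) [IsFiniteMeasure ω] {C γ : ℝ}
    (hγ : 0 ≤ γ)
    (h : ∀ t : ℝ, 0 ≤ t → t < 1 →
      (∫ s in Ico (0 : ℝ) t, ((1 - t) / (1 - s)) ^ γ ∂ω) ≤ C * ω.real (Ico t 1))
    {r t : ℝ} (hr : 0 ≤ r) (hrt : r ≤ t) (ht : t < 1) :
    ((1 - t) / (1 - r)) ^ γ * ω.real (Ico r 1) ≤ (C + 1) * ω.real (Ico t 1) := by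
  set c := ((1 - t) / (1 - r)) ^ γ
  have hsplit : ω.real (Ico r 1) = ω.real (Ico r t) + ω.real (Ico t 1) := by
    rw [← measureReal_union Ico_disjoint_Ico_same measurableSet_Ico,
      Ico_union_Ico_eq_Ico hrt ht.le]
  have hnear : c * ω.real (Ico r t) ≤ C * ω.real (Ico t 1) :=
    (mul_measureReal_le_setIntegral_of_subset (Ico_subset_Ico hr le_rfl) measurableSet_Ico
      measurableSet_Ico (integrableOn_rpow_one_sub_div_one_sub ω hγ 0 ht)
      (fun s hs ↦ Real.rpow_nonneg (div_nonneg (by linarith) (by linarith [hs.2])) γ)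
      (fun s hs ↦ rpow_one_sub_div_one_sub_le_of_le hγ hs.1 hs.2.le ht)).trans
      (h t (hr.trans hrt) ht)
  have hfar : c * ω.real (Ico t 1) ≤ 1 * ω.real (Ico t 1) :=
    mul_le_mul_of_nonneg_right (rpow_one_sub_div_one_sub_le_one hγ hrt ht) measureReal_nonneg
  rw [hsplit]
  linarith

lemma le_mul_two_rpow_mul_of_rpow_mul_le {g : ℝ → ℝ} {γ K : ℝ}
    (h : ∀ r t : ℝ, 0 ≤ r → r ≤ t → t < 1 →
      ((1 - t) / (1 - r)) ^ γ * g r ≤ K * g t)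
    {r : ℝ} (hr : 0 ≤ r) (hr1 : r < 1) :
    g r ≤ K * 2 ^ γ * g ((1 + r) / 2) := by
  have hhalf : (1 - (1 + r) / 2) / (1 - r) = 2⁻¹ := by
    rw [show 1 - (1 + r) / 2 = (1 - r) / 2 by ring, div_div_cancel_left' (by linarith)]
  have key := h r ((1 + r) / 2) hr (by linarith) (by linarith)
  rw [hhalf, Real.inv_rpow zero_le_two] at key
  have h2 : (0 : ℝ) < 2 ^ γ := by positivity
  calc g r = 2 ^ γ * ((2 ^ γ)⁻¹ * g r) := by field_simp
    _ ≤ 2 ^ γ * (K * g ((1 + r) / 2)) := mul_le_mul_of_nonneg_left key h2.le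
    _ = K * 2 ^ γ * g ((1 + r) / 2) := by ring

theorem stmt_3 (ω : Measure ℝ) [IsFiniteMeasure ω] (C γ : ℝ) (hC : 0 < C) (hγ : 0 < γ)
    (h : ∀ t : ℝ, 0 ≤ t → t < 1 →
      (∫ s in Ico (0 : ℝ) t, ((1 - t) / (1 - s)) ^ γ ∂ω) ≤ C * (ω (Ico t 1)).toReal) :
    (∀ r t : ℝ, 0 ≤ r → r ≤ t → t < 1 →
      ((1 - t) / (1 - r)) ^ γ * (ω (Ico r 1)).toReal ≤ (C + 1) * (ω (Ico t 1)).toReal) ∧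
    ∃ C'' : ℝ, 0 < C'' ∧ ∀ r : ℝ, 0 ≤ r → r < 1 →
      (ω (Ico r 1)).toReal ≤ C'' * (ω (Ico ((1 + r) / 2) 1)).toReal := by
  have hweighted : ∀ r t : ℝ, 0 ≤ r → r ≤ t → t < 1 →
      ((1 - t) / (1 - r)) ^ γ * ω.real (Ico r 1) ≤ (C + 1) * ω.real (Ico t 1) :=
    fun _ _ hr hrt ht ↦ rpow_mul_measureReal_Ico_le ω hγ.le h hr hrt ht
  exact ⟨hweighted, (C + 1) * 2 ^ γ, by positivity,
    fun _ hr hr1 ↦ le_mul_two_rpow_mul_of_rpow_mul_le (g := fun r ↦ ω.real (Ico r 1))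
      hweighted hr hr1⟩
end

section
/- If ω is a finite positive Borel measure on [0,1) satisfying ∫₀ᵗ ((1-t)/(1-s))^γ dω(s) ≤ C·ω̂(t) for all t ∈ [0,1) (for some C, γ > 0), then there is a constant C' such that ∫₀ᵗ s^{1/(1-t)} dω(s) ≤ C'·ω̂(t) for all t ∈ [0,1). -/
/-!
Since `s ≤ exp (s - 1)`, for `0 ≤ s < t < 1` one has `s ^ (1 / (1 - t)) ≤ exp (-x)` with
`x = (1 - s) / (1 - t) ≥ 1`, and `exp (-x) ≤ ⌈γ⌉! * x⁻¹ ^ γ` by the exponential series. Hence the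
integrand `s ^ (1 / (1 - t))` is pointwise at most `⌈γ⌉!` times the integrand `((1 - t) / (1 - s)) ^ γ`
of the hypothesis, and one may take `C' = ⌈γ⌉! * C`.
-/

open MeasureTheory Set Real

lemma rpow_le_exp_mul_sub_one {s a : ℝ} (hs : 0 ≤ s) (ha : 0 ≤ a) :
    s ^ a ≤ exp ((s - 1) * a) :=
  calc s ^ a ≤ exp (s - 1) ^ a := rpow_le_rpow hs (by linarith [add_one_le_exp (s - 1)]) ha
    _ = exp ((s - 1) * a) := (exp_mul _ _).symm

lemma exp_neg_le_factorial_ceil_mul_inv_rpow {x : ℝ} (γ : ℝ) (hx : 1 ≤ x) :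
    exp (-x) ≤ (⌈γ⌉₊).factorial * x⁻¹ ^ γ := by
  have hx₀ : 0 < x := by linarith
  have hpow : x ^ γ ≤ (⌈γ⌉₊).factorial * exp x :=
    calc x ^ γ ≤ x ^ (⌈γ⌉₊ : ℝ) := rpow_le_rpow_of_exponent_le hx (Nat.le_ceil γ)
      _ = x ^ ⌈γ⌉₊ := rpow_natCast x _
      _ ≤ (⌈γ⌉₊).factorial * exp x :=
        (div_le_iff₀' (by positivity)).mp (pow_div_factorial_le_exp _ hx₀.le _)
  rw [exp_neg, inv_rpow hx₀.le, ← div_eq_mul_inv, le_div_iff₀ (by positivity),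
    inv_mul_le_iff₀ (exp_pos x), mul_comm]
  exact hpow

lemma rpow_one_div_one_sub_le {s t : ℝ} (γ : ℝ) (hs : 0 ≤ s) (hst : s ≤ t) (ht : t < 1) :
    s ^ (1 / (1 - t)) ≤ (⌈γ⌉₊).factorial * ((1 - t) / (1 - s)) ^ γ := by
  have ht₀ : 0 < 1 - t := by linarith
  calc s ^ (1 / (1 - t)) ≤ exp ((s - 1) * (1 / (1 - t))) :=
        rpow_le_exp_mul_sub_one hs (by positivity)
    _ = exp (-((1 - s) / (1 - t))) := by ring_nf
    _ ≤ (⌈γ⌉₊).factorial * ((1 - s) / (1 - t))⁻¹ ^ γ :=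
        exp_neg_le_factorial_ceil_mul_inv_rpow γ ((one_le_div ht₀).mpr (by linarith))
    _ = (⌈γ⌉₊).factorial * ((1 - t) / (1 - s)) ^ γ := by rw [inv_div]

lemma integrableOn_Ico_rpow_one_div_one_sub (μ : Measure ℝ) [IsFiniteMeasure μ] {t : ℝ}
    (ht : t < 1) : IntegrableOn (fun s ↦ s ^ (1 / (1 - t))) (Ico 0 t) μ := by
  have hexp : 0 < 1 / (1 - t) := one_div_pos.mpr (by linarith)
  exact ((continuous_id.rpow_const fun _ ↦ Or.inr hexp.le).continuousOn.integrableOn_Icc).mono_set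
    Ico_subset_Icc_self

lemma integrableOn_Ico_div_one_sub_rpow (μ : Measure ℝ) [IsFiniteMeasure μ] {t : ℝ} (γ : ℝ)
    (ht : t < 1) : IntegrableOn (fun s ↦ ((1 - t) / (1 - s)) ^ γ) (Ico 0 t) μ := by
  have hcont : ContinuousOn (fun s ↦ ((1 - t) / (1 - s)) ^ γ) (Icc 0 t) := by
    refine ContinuousOn.rpow_const ?_ fun s hs ↦ Or.inl ?_
    · exact continuousOn_const.div (continuousOn_const.sub continuousOn_id) fun s hs ↦ by
        linarith [hs.2]
    · exact (div_pos (by linarith) (by linarith [hs.2])).ne'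
  exact hcont.integrableOn_Icc.mono_set Ico_subset_Icc_self

theorem stmt_4_general (ω : Measure ℝ) [IsFiniteMeasure ω] (C γ : ℝ) (hC : 0 < C)
    (h : ∀ t : ℝ, 0 ≤ t → t < 1 →
      (∫ s in Ico (0 : ℝ) t, ((1 - t) / (1 - s)) ^ γ ∂ω) ≤ C * (ω (Ico t 1)).toReal) :
    ∃ C' : ℝ, 0 < C' ∧ ∀ t : ℝ, 0 ≤ t → t < 1 →
      (∫ s in Ico (0 : ℝ) t, s ^ (1 / (1 - t)) ∂ω) ≤ C' * (ω (Ico t 1)).toReal := by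
  refine ⟨(⌈γ⌉₊).factorial * C, by positivity, fun t ht₀ ht₁ ↦ ?_⟩
  calc (∫ s in Ico (0 : ℝ) t, s ^ (1 / (1 - t)) ∂ω)
      ≤ ∫ s in Ico (0 : ℝ) t, (⌈γ⌉₊).factorial * ((1 - t) / (1 - s)) ^ γ ∂ω :=
        setIntegral_mono_on (integrableOn_Ico_rpow_one_div_one_sub ω ht₁)
          ((integrableOn_Ico_div_one_sub_rpow ω γ ht₁).const_mul _) measurableSet_Ico
          fun s hs ↦ rpow_one_div_one_sub_le γ hs.1 hs.2.le ht₁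
    _ = (⌈γ⌉₊).factorial * ∫ s in Ico (0 : ℝ) t, ((1 - t) / (1 - s)) ^ γ ∂ω :=
        integral_const_mul _ _
    _ ≤ (⌈γ⌉₊).factorial * (C * (ω (Ico t 1)).toReal) := by gcongr; exact h t ht₀ ht₁
    _ = (⌈γ⌉₊).factorial * C * (ω (Ico t 1)).toReal := (mul_assoc _ _ _).symm

theorem stmt_4 (ω : Measure ℝ) [IsFiniteMeasure ω] (C γ : ℝ) (hC : 0 < C) (hγ : 0 < γ)
    (h : ∀ t : ℝ, 0 ≤ t → t < 1 →
      (∫ s in Ico (0 : ℝ) t, ((1 - t) / (1 - s)) ^ γ ∂ω) ≤ C * (ω (Ico t 1)).toReal) :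
    ∃ C' : ℝ, 0 < C' ∧ ∀ t : ℝ, 0 ≤ t → t < 1 →
      (∫ s in Ico (0 : ℝ) t, s ^ (1 / (1 - t)) ∂ω) ≤ C' * (ω (Ico t 1)).toReal :=
  stmt_4_general ω C γ hC h
end

section
/- If ω is a finite positive Borel measure on [0,1) satisfying ∫₀ᵗ s^{1/(1-t)} dω(s) ≤ C·ω̂(t) for all 0 ≤ t < 1, then r^{1/(1-t)}·ω̂(r) ≤ (C+1)·ω̂(t) for all 0 ≤ r ≤ t < 1. -/
open MeasureTheory Set

/-!
Split `ω̂(r) = ω([r, t)) + ω̂(t)`. On `[r, t)` the integrand `s ^ (1/(1-t))` is at least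
`r ^ (1/(1-t))`, so `r ^ (1/(1-t)) ω([r, t))` is at most the integral in the hypothesis, hence
at most `C ω̂(t)`; the remaining term is at most `ω̂(t)` because `r ^ (1/(1-t)) ≤ 1`.
-/

lemma integrableOn_rpow_Ico (μ : Measure ℝ) [IsFiniteMeasure μ] {p : ℝ} (hp : 0 ≤ p) (t : ℝ) :
    IntegrableOn (fun s : ℝ => s ^ p) (Ico 0 t) μ :=
  (ContinuousOn.integrableOn_Icc fun s _ =>
    (Real.continuousAt_rpow_const s p (Or.inr hp)).continuousWithinAt).mono_set Ico_subset_Icc_self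

lemma rpow_mul_measureReal_Ico_le_setIntegral (μ : Measure ℝ) [IsFiniteMeasure μ] {p r t : ℝ}
    (hp : 0 ≤ p) (hr : 0 ≤ r) :
    r ^ p * μ.real (Ico r t) ≤ ∫ s in Ico 0 t, s ^ p ∂μ := by
  have hint := integrableOn_rpow_Ico μ hp t
  have hsub : Ico r t ⊆ Ico 0 t := Ico_subset_Ico_left hr
  calc r ^ p * μ.real (Ico r t) ≤ ∫ s in Ico r t, s ^ p ∂μ :=
        setIntegral_ge_of_const_le_real measurableSet_Ico (measure_ne_top _ _)
          (fun s hs => Real.rpow_le_rpow hr hs.1 hp) (hint.mono_set hsub)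
    _ ≤ ∫ s in Ico 0 t, s ^ p ∂μ :=
        setIntegral_mono_set hint
          ((ae_restrict_iff' measurableSet_Ico).2 (ae_of_all _ fun s hs => Real.rpow_nonneg hs.1 _))
          (ae_of_all _ hsub)

lemma measureReal_Ico_eq_add (μ : Measure ℝ) [IsFiniteMeasure μ] {a b c : ℝ} (hab : a ≤ b)
    (hbc : b ≤ c) : μ.real (Ico a c) = μ.real (Ico a b) + μ.real (Ico b c) := by
  rw [← Ico_union_Ico_eq_Ico hab hbc, measureReal_union Ico_disjoint_Ico_same measurableSet_Ico]

theorem stmt_5_general (ω : Measure ℝ) [IsFiniteMeasure ω] (C : ℝ)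
    (h : ∀ t : ℝ, 0 ≤ t → t < 1 →
      (∫ s in Ico (0 : ℝ) t, s ^ (1 / (1 - t)) ∂ω) ≤ C * (ω (Ico t 1)).toReal) :
    ∀ r t : ℝ, 0 ≤ r → r ≤ t → t < 1 →
      r ^ (1 / (1 - t)) * (ω (Ico r 1)).toReal ≤ (C + 1) * (ω (Ico t 1)).toReal := by
  intro r t hr hrt ht
  have hp : 0 ≤ 1 / (1 - t) := one_div_nonneg.2 (by linarith)
  have hrp : r ^ (1 / (1 - t)) ≤ 1 := Real.rpow_le_one hr (by linarith) hp
  have hnear : r ^ (1 / (1 - t)) * ω.real (Ico r t) ≤ C * ω.real (Ico t 1) :=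
    (rpow_mul_measureReal_Ico_le_setIntegral ω hp hr).trans (h t (hr.trans hrt) ht)
  have hfar : r ^ (1 / (1 - t)) * ω.real (Ico t 1) ≤ ω.real (Ico t 1) :=
    mul_le_of_le_one_left measureReal_nonneg hrp
  rw [← measureReal_def, ← measureReal_def]
  rw [measureReal_Ico_eq_add ω hrt ht.le]
  linarith

theorem stmt_5 (ω : Measure ℝ) [IsFiniteMeasure ω] (C : ℝ) (hC : 0 < C)
    (h : ∀ t : ℝ, 0 ≤ t → t < 1 →
      (∫ s in Ico (0 : ℝ) t, s ^ (1 / (1 - t)) ∂ω) ≤ C * (ω (Ico t 1)).toReal) :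
    ∀ r t : ℝ, 0 ≤ r → r ≤ t → t < 1 →
      r ^ (1 / (1 - t)) * (ω (Ico r 1)).toReal ≤ (C + 1) * (ω (Ico t 1)).toReal :=
  stmt_5_general ω C h
end

section
/- Let ω be a finite positive Borel measure on [0,1) with ω̂ doubling. Then the moments ω_x = ∫₀¹ r^x dω(r) satisfy ω_x ≍ ω̂(1 - 1/x) for all x ∈ [1,∞), i.e. there exist constants c, C > 0 with c·ω̂(1-1/x) ≤ ∫₀¹ r^x dω(r) ≤ C·ω̂(1-1/x) for all x ≥ 1. -/
open MeasureTheory Set Real Filter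

/-!
Write `ω̂(t) = ω([t, 1))`. Lower bound: on `[1 - 1/(2x), 1)` Bernoulli's inequality gives
`r ^ x ≥ 1/2`, and one doubling step gives `ω̂(1 - 1/x) ≤ C₀ ω̂(1 - 1/(2x))`.
Upper bound: cut `[0, 1)` at the points `aₙ = max 0 (1 - 2ⁿ/x)`, which satisfy
`aₙ₊₁ = max 0 (2aₙ - 1)`, so iterating the doubling condition gives `ω̂(aₙ) ≤ C₀ⁿ ω̂(1 - 1/x)`.
On `[aₙ₊₁, aₙ)` we have `r ^ x ≤ aₙ ^ x ≤ e^{-2ⁿ}`, hence the integral is at most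
`(1 + ∑ₙ e^{-2ⁿ} C₀ⁿ⁺¹) ω̂(1 - 1/x)`, and the doubly exponential decay makes the series converge.
-/

noncomputable def tailMass (ω : Measure ℝ) (t : ℝ) : ℝ := ω.real (Ico t 1)

lemma tailMass_nonneg (ω : Measure ℝ) (t : ℝ) : 0 ≤ tailMass ω t := measureReal_nonneg

lemma tailMass_antitone (ω : Measure ℝ) [IsFiniteMeasure ω] : Antitone (tailMass ω) :=
  fun _ _ h => measureReal_mono (Ico_subset_Ico_left h)

lemma tailMass_max_two_mul_sub_one_le {ω : Measure ℝ} [IsFiniteMeasure ω] {C₀ : ℝ}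
    (hC₀ : 0 ≤ C₀)
    (hdoub : ∀ r : ℝ, 0 ≤ r → r < 1 → tailMass ω r ≤ C₀ * tailMass ω ((1 + r) / 2))
    {s : ℝ} (hs : s < 1) : tailMass ω (max 0 (2 * s - 1)) ≤ C₀ * tailMass ω s := by
  rcases le_total (2 * s - 1) 0 with h | h
  · rw [max_eq_left h]
    calc tailMass ω 0 ≤ C₀ * tailMass ω (1 / 2) := by simpa using hdoub 0 le_rfl one_pos
      _ ≤ C₀ * tailMass ω s := by gcongr; exact tailMass_antitone ω (by linarith)
  · rw [max_eq_right h]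
    convert hdoub (2 * s - 1) h (by linarith) using 3
    ring

noncomputable def dyadicPoint (x : ℝ) (n : ℕ) : ℝ := max 0 (1 - 2 ^ n / x)

lemma dyadicPoint_nonneg (x : ℝ) (n : ℕ) : 0 ≤ dyadicPoint x n := le_max_left _ _

lemma dyadicPoint_zero {x : ℝ} (hx : 1 ≤ x) : dyadicPoint x 0 = 1 - 1 / x := by
  have : 1 / x ≤ 1 := div_le_one_of_le₀ hx (by linarith)
  rw [dyadicPoint, pow_zero, max_eq_right (by linarith)]

lemma dyadicPoint_succ (x : ℝ) (n : ℕ) :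
    dyadicPoint x (n + 1) = max 0 (2 * dyadicPoint x n - 1) := by
  have h : 1 - 2 ^ (n + 1) / x = 2 * (1 - 2 ^ n / x) - 1 := by ring
  rw [dyadicPoint, dyadicPoint, h]
  rcases le_total 0 (1 - 2 ^ n / x) with h' | h'
  · rw [max_eq_right h']
  · rw [max_eq_left h', max_eq_left (by linarith), max_eq_left (by linarith)]

lemma dyadicPoint_lt_one {x : ℝ} (hx : 0 < x) (n : ℕ) : dyadicPoint x n < 1 := by
  have : 0 < 2 ^ n / x := by positivity
  exact max_lt one_pos (by linarith)

lemma dyadicPoint_succ_le {x : ℝ} (hx : 0 < x) (n : ℕ) :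
    dyadicPoint x (n + 1) ≤ dyadicPoint x n := by
  rw [dyadicPoint_succ]
  exact max_le (dyadicPoint_nonneg x n) (by linarith [dyadicPoint_lt_one hx n])

lemma dyadicPoint_rpow_le {x : ℝ} (hx : 0 < x) (n : ℕ) :
    dyadicPoint x n ^ x ≤ exp (-2 ^ n) := by
  have hle : dyadicPoint x n ≤ exp (-(2 ^ n / x)) :=
    max_le (exp_pos _).le (by linarith [add_one_le_exp (-(2 ^ n / x))])
  calc dyadicPoint x n ^ x ≤ exp (-(2 ^ n / x)) ^ x :=
        rpow_le_rpow (dyadicPoint_nonneg x n) hle hx.le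
    _ = exp (-2 ^ n) := by rw [← exp_mul]; field_simp

lemma exists_dyadicPoint_eq_zero {x : ℝ} (hx : 0 < x) : ∃ N, dyadicPoint x N = 0 := by
  obtain ⟨N, hN⟩ := pow_unbounded_of_one_lt x one_lt_two
  have : 1 < 2 ^ N / x := by rwa [one_lt_div hx]
  exact ⟨N, max_eq_left (by linarith)⟩

lemma tailMass_dyadicPoint_le {ω : Measure ℝ} [IsFiniteMeasure ω] {C₀ : ℝ} (hC₀ : 0 ≤ C₀)
    (hdoub : ∀ r : ℝ, 0 ≤ r → r < 1 → tailMass ω r ≤ C₀ * tailMass ω ((1 + r) / 2))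
    {x : ℝ} (hx : 1 ≤ x) (n : ℕ) :
    tailMass ω (dyadicPoint x n) ≤ C₀ ^ n * tailMass ω (1 - 1 / x) := by
  induction n with
  | zero => simp [dyadicPoint_zero hx]
  | succ n ih =>
    calc tailMass ω (dyadicPoint x (n + 1)) ≤ C₀ * tailMass ω (dyadicPoint x n) := by
          rw [dyadicPoint_succ]
          exact tailMass_max_two_mul_sub_one_le hC₀ hdoub (dyadicPoint_lt_one (by linarith) n)
      _ ≤ C₀ * (C₀ ^ n * tailMass ω (1 - 1 / x)) := by gcongr
      _ = C₀ ^ (n + 1) * tailMass ω (1 - 1 / x) := by ring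

lemma integrableOn_rpow_Ico_s6 (ω : Measure ℝ) [IsFiniteMeasure ω] {x : ℝ} (hx : 0 ≤ x)
    (a b : ℝ) : IntegrableOn (fun r : ℝ => r ^ x) (Ico a b) ω :=
  (continuous_rpow_const hx).integrableOn_Icc.mono_set Ico_subset_Icc_self

lemma setIntegral_rpow_Ico_le {ω : Measure ℝ} [IsFiniteMeasure ω] {x a b : ℝ} (hx : 0 ≤ x)
    (ha : 0 ≤ a) : ∫ r in Ico a b, r ^ x ∂ω ≤ b ^ x * ω.real (Ico a b) := by
  calc ∫ r in Ico a b, r ^ x ∂ω ≤ ∫ r in Ico a b, b ^ x ∂ω :=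
        setIntegral_mono_on (integrableOn_rpow_Ico_s6 ω hx a b) (integrableOn_const)
          measurableSet_Ico fun r hr => rpow_le_rpow (ha.trans hr.1) hr.2.le hx
    _ = b ^ x * ω.real (Ico a b) := by rw [setIntegral_const, smul_eq_mul, mul_comm]

lemma rpow_mul_tailMass_le_integral {ω : Measure ℝ} [IsFiniteMeasure ω] {x a : ℝ} (hx : 0 ≤ x)
    (ha : 0 ≤ a) : a ^ x * tailMass ω a ≤ ∫ r in Ico (0 : ℝ) 1, r ^ x ∂ω := by
  calc a ^ x * tailMass ω a = ∫ r in Ico a 1, a ^ x ∂ω := by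
        rw [setIntegral_const, smul_eq_mul, mul_comm, tailMass]
    _ ≤ ∫ r in Ico a 1, r ^ x ∂ω :=
        setIntegral_mono_on integrableOn_const (integrableOn_rpow_Ico_s6 ω hx a 1)
          measurableSet_Ico fun r hr => rpow_le_rpow ha hr.1 hx
    _ ≤ ∫ r in Ico (0 : ℝ) 1, r ^ x ∂ω := by
        refine setIntegral_mono_set (integrableOn_rpow_Ico_s6 ω hx 0 1) ?_
          (Ico_subset_Ico_left ha).eventuallyLE
        filter_upwards [ae_restrict_mem measurableSet_Ico] with r hr
        exact rpow_nonneg hr.1 x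

lemma half_le_one_sub_rpow {x : ℝ} (hx : 1 ≤ x) : 1 / 2 ≤ (1 - 1 / (2 * x)) ^ x := by
  have hs : 1 / (2 * x) ≤ 1 := by
    rw [div_le_one (by positivity)]; linarith
  have := one_add_mul_self_le_rpow_one_add (s := -(1 / (2 * x))) (by linarith) hx
  convert this using 1
  · field_simp; ring
  · ring_nf

lemma mul_tailMass_le_integral_rpow {ω : Measure ℝ} [IsFiniteMeasure ω] {C₀ : ℝ} (hC₀ : 0 < C₀)
    (hdoub : ∀ r : ℝ, 0 ≤ r → r < 1 → tailMass ω r ≤ C₀ * tailMass ω ((1 + r) / 2))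
    {x : ℝ} (hx : 1 ≤ x) :
    1 / (2 * C₀) * tailMass ω (1 - 1 / x) ≤ ∫ r in Ico (0 : ℝ) 1, r ^ x ∂ω := by
  have hx0 : 0 < x := by linarith
  have hinv : 1 / x ≤ 1 := div_le_one_of_le₀ hx hx0.le
  have hy : 0 ≤ 1 - 1 / (2 * x) := by
    have : 1 / (2 * x) ≤ 1 / x := by gcongr; linarith
    linarith
  have hstep : tailMass ω (1 - 1 / x) ≤ C₀ * tailMass ω (1 - 1 / (2 * x)) := by
    convert hdoub (1 - 1 / x) (by linarith) (by simp [hx0]) using 3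
    field_simp; ring
  calc 1 / (2 * C₀) * tailMass ω (1 - 1 / x)
      ≤ 1 / (2 * C₀) * (C₀ * tailMass ω (1 - 1 / (2 * x))) := by gcongr
    _ = 1 / 2 * tailMass ω (1 - 1 / (2 * x)) := by field_simp
    _ ≤ (1 - 1 / (2 * x)) ^ x * tailMass ω (1 - 1 / (2 * x)) :=
        mul_le_mul_of_nonneg_right (half_le_one_sub_rpow hx) (tailMass_nonneg ω _)
    _ ≤ ∫ r in Ico (0 : ℝ) 1, r ^ x ∂ω := rpow_mul_tailMass_le_integral hx0.le hy

lemma summable_exp_neg_two_pow_mul_pow (C : ℝ) :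
    Summable fun k : ℕ => exp (-2 ^ k) * C ^ (k + 1) := by
  refine summable_of_ratio_norm_eventually_le (r := 1 / 2) (by norm_num) ?_
  have hlim : Tendsto (fun k : ℕ => |C| * exp (-2 ^ k)) atTop (nhds 0) := by
    simpa using (tendsto_exp_atBot.comp (tendsto_neg_atTop_atBot.comp
      (tendsto_pow_atTop_atTop_of_one_lt one_lt_two))).const_mul |C|
  filter_upwards [hlim.eventually_le_const (by norm_num : (0 : ℝ) < 1 / 2)] with k hk
  have hexp : exp (-2 ^ (k + 1)) = exp (-2 ^ k) * exp (-2 ^ k) := by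
    rw [← exp_add]; ring_nf
  calc ‖exp (-2 ^ (k + 1)) * C ^ (k + 1 + 1)‖
      = |C| * exp (-2 ^ k) * ‖exp (-2 ^ k) * C ^ (k + 1)‖ := by
        simp only [norm_mul, norm_pow, Real.norm_eq_abs, abs_exp, hexp]; ring
    _ ≤ 1 / 2 * ‖exp (-2 ^ k) * C ^ (k + 1)‖ := by gcongr

lemma setIntegral_rpow_dyadicPoint_le {ω : Measure ℝ} [IsFiniteMeasure ω] {C₀ : ℝ}
    (hC₀ : 0 ≤ C₀)
    (hdoub : ∀ r : ℝ, 0 ≤ r → r < 1 → tailMass ω r ≤ C₀ * tailMass ω ((1 + r) / 2))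
    {x : ℝ} (hx : 1 ≤ x) (n : ℕ) :
    ∫ r in Ico (dyadicPoint x n) 1, r ^ x ∂ω ≤
      (1 + ∑ k ∈ Finset.range n, exp (-2 ^ k) * C₀ ^ (k + 1)) * tailMass ω (1 - 1 / x) := by
  have hx0 : 0 < x := by linarith
  induction n with
  | zero =>
    simpa [dyadicPoint_zero hx, tailMass] using
      setIntegral_rpow_Ico_le (ω := ω) (b := 1) hx0.le (dyadicPoint_nonneg x 0)
  | succ n ih =>
    set a := dyadicPoint x (n + 1)
    set b := dyadicPoint x n
    have hab : a ≤ b := dyadicPoint_succ_le hx0 n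
    have hb1 : b ≤ 1 := (dyadicPoint_lt_one hx0 n).le
    have hsplit :
        ∫ r in Ico a 1, r ^ x ∂ω = ∫ r in Ico a b, r ^ x ∂ω + ∫ r in Ico b 1, r ^ x ∂ω := by
      rw [← Ico_union_Ico_eq_Ico hab hb1]
      exact setIntegral_union Ico_disjoint_Ico_same measurableSet_Ico
        (integrableOn_rpow_Ico_s6 ω hx0.le a b) (integrableOn_rpow_Ico_s6 ω hx0.le b 1)
    have hpiece : ∫ r in Ico a b, r ^ x ∂ω ≤
        exp (-2 ^ n) * (C₀ ^ (n + 1) * tailMass ω (1 - 1 / x)) :=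
      calc ∫ r in Ico a b, r ^ x ∂ω ≤ b ^ x * ω.real (Ico a b) :=
            setIntegral_rpow_Ico_le hx0.le (dyadicPoint_nonneg x _)
        _ ≤ exp (-2 ^ n) * tailMass ω a := by
            gcongr
            · exact dyadicPoint_rpow_le hx0 n
            · exact measureReal_mono (Ico_subset_Ico_right hb1)
        _ ≤ exp (-2 ^ n) * (C₀ ^ (n + 1) * tailMass ω (1 - 1 / x)) := by
            gcongr; exact tailMass_dyadicPoint_le hC₀ hdoub hx (n + 1)
    calc ∫ r in Ico a 1, r ^ x ∂ω
        = ∫ r in Ico a b, r ^ x ∂ω + ∫ r in Ico b 1, r ^ x ∂ω := hsplit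
      _ ≤ exp (-2 ^ n) * (C₀ ^ (n + 1) * tailMass ω (1 - 1 / x)) +
          (1 + ∑ k ∈ Finset.range n, exp (-2 ^ k) * C₀ ^ (k + 1)) * tailMass ω (1 - 1 / x) :=
        add_le_add hpiece ih
      _ = (1 + ∑ k ∈ Finset.range (n + 1), exp (-2 ^ k) * C₀ ^ (k + 1)) *
          tailMass ω (1 - 1 / x) := by rw [Finset.sum_range_succ]; ring

lemma integral_rpow_le_mul_tailMass {ω : Measure ℝ} [IsFiniteMeasure ω] {C₀ : ℝ}
    (hC₀ : 0 ≤ C₀)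
    (hdoub : ∀ r : ℝ, 0 ≤ r → r < 1 → tailMass ω r ≤ C₀ * tailMass ω ((1 + r) / 2))
    {x : ℝ} (hx : 1 ≤ x) :
    ∫ r in Ico (0 : ℝ) 1, r ^ x ∂ω ≤
      (1 + ∑' k : ℕ, exp (-2 ^ k) * C₀ ^ (k + 1)) * tailMass ω (1 - 1 / x) := by
  obtain ⟨N, hN⟩ := exists_dyadicPoint_eq_zero (by linarith : 0 < x)
  have hsum : ∑ k ∈ Finset.range N, exp (-2 ^ k) * C₀ ^ (k + 1) ≤
      ∑' k : ℕ, exp (-2 ^ k) * C₀ ^ (k + 1) :=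
    (summable_exp_neg_two_pow_mul_pow C₀).sum_le_tsum _ fun k _ => by positivity
  calc ∫ r in Ico (0 : ℝ) 1, r ^ x ∂ω = ∫ r in Ico (dyadicPoint x N) 1, r ^ x ∂ω := by rw [hN]
    _ ≤ _ := setIntegral_rpow_dyadicPoint_le hC₀ hdoub hx N
    _ ≤ _ := mul_le_mul_of_nonneg_right (by linarith) (tailMass_nonneg ω _)

theorem stmt_6_general (ω : Measure ℝ) [IsFiniteMeasure ω] (C₀ : ℝ) (hC₀ : 1 ≤ C₀)
    (hdoub : ∀ r : ℝ, 0 ≤ r → r < 1 →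
      (ω (Ico r 1)).toReal ≤ C₀ * (ω (Ico ((1 + r) / 2) 1)).toReal) :
    ∃ c C : ℝ, 0 < c ∧ 0 < C ∧ ∀ x : ℝ, 1 ≤ x →
      c * (ω (Ico (1 - 1 / x) 1)).toReal ≤ (∫ r in Ico (0 : ℝ) 1, r ^ x ∂ω) ∧
      (∫ r in Ico (0 : ℝ) 1, r ^ x ∂ω) ≤ C * (ω (Ico (1 - 1 / x) 1)).toReal := by
  have hC₀pos : 0 < C₀ := by linarith
  have htsum : 0 ≤ ∑' k : ℕ, exp (-2 ^ k) * C₀ ^ (k + 1) := tsum_nonneg fun k => by positivity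
  exact ⟨1 / (2 * C₀), 1 + ∑' k : ℕ, exp (-2 ^ k) * C₀ ^ (k + 1), by positivity, by linarith,
    fun x hx => ⟨mul_tailMass_le_integral_rpow hC₀pos hdoub hx,
      integral_rpow_le_mul_tailMass hC₀pos.le hdoub hx⟩⟩

theorem stmt_6 (ω : Measure ℝ) [IsFiniteMeasure ω] (C₀ : ℝ) (hC₀ : 1 ≤ C₀)
    (hdoub : ∀ r : ℝ, 0 ≤ r → r < 1 →
      (ω (Ico r 1)).toReal ≤ C₀ * (ω (Ico ((1 + r) / 2) 1)).toReal)
    (hcero : (ω (Ico (0 : ℝ) 1)).toReal ≤ C₀ * (ω (Ico (1 / 2 : ℝ) 1)).toReal) :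
    ∃ c C : ℝ, 0 < c ∧ 0 < C ∧ ∀ x : ℝ, 1 ≤ x →
      c * (ω (Ico (1 - 1 / x) 1)).toReal ≤ (∫ r in Ico (0 : ℝ) 1, r ^ x ∂ω) ∧
      (∫ r in Ico (0 : ℝ) 1, r ^ x ∂ω) ≤ C * (ω (Ico (1 - 1 / x) 1)).toReal :=
  stmt_6_general ω C₀ hC₀ hdoub
end

section
/- Let ω be a finite positive Borel measure on [0,1) with ω̂ doubling. Then there exist C > 0 and η > 0 such that the moments satisfy ω_x ≤ C·(y/x)^η · ω_y for all 0 < x ≤ y < ∞, where ω_x = ∫₀¹ r^x dω(r). -/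
/-!
Doubling of `ω̂` along the points `1 - 2⁻ʲ` makes the moments doubling, `ω_x ≤ D ω_{2x}`.
If `2ᵐ ≤ x`, the layer `[1 - 2⁻ʲ, 1 - 2⁻ʲ⁻¹)` carries mass at most `C₀ᵐ⁻ʲ ω̂(1 - 2⁻ᵐ)` while
`r ^ x ≤ exp (-2ᵐ⁻ʲ⁻¹)` on it, so `ω_x ≲ ω̂(1 - 2⁻ᵐ)`; conversely `r ^ (2x) ≥ 1/2` on
`[1 - 2⁻ᵐ⁻³, 1)` when `x < 2ᵐ⁺¹`, so `ω̂(1 - 2⁻ᵐ⁻³) ≤ 2 ω_{2x}`, and three doubling steps join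
the two. Iterating `ω_x ≤ D ω_{2x}` about `log₂ (y / x)` times gives the bound with `η = log₂ D`.
-/

open MeasureTheory Set

theorem le_pow_mul_of_le_mul_two_mul {f : ℝ → ℝ} {D : ℝ} (hD : 0 ≤ D)
    (hf : ∀ x, 0 < x → f x ≤ D * f (2 * x)) {x : ℝ} (hx : 0 < x) (n : ℕ) :
    f x ≤ D ^ n * f (2 ^ n * x) := by
  induction n with
  | zero => simp
  | succ n ih =>
    calc f x ≤ D ^ n * f (2 ^ n * x) := ih
      _ ≤ D ^ n * (D * f (2 * (2 ^ n * x))) :=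
          mul_le_mul_of_nonneg_left (hf _ (by positivity)) (pow_nonneg hD n)
      _ = D ^ (n + 1) * f (2 ^ (n + 1) * x) := by ring_nf

theorem le_mul_rpow_mul_of_le_mul_two_mul {f : ℝ → ℝ} {D : ℝ} (hD : 1 ≤ D)
    (hanti : AntitoneOn f (Ioi 0)) (hnonneg : ∀ y, 0 < y → 0 ≤ f y)
    (hf : ∀ x, 0 < x → f x ≤ D * f (2 * x)) {x y : ℝ} (hx : 0 < x) (hxy : x ≤ y) :
    f x ≤ D * (y / x) ^ Real.logb 2 D * f y := by
  obtain ⟨k, hk_le, hk_lt⟩ := exists_nat_pow_near ((one_le_div hx).mpr hxy) one_lt_two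
  have hy : 0 < y := hx.trans_le hxy
  have hDk : D ^ k ≤ (y / x) ^ Real.logb 2 D := calc
    D ^ k = ((2 : ℝ) ^ k) ^ Real.logb 2 D := by
      rw [← Real.rpow_natCast_mul zero_le_two, mul_comm, Real.rpow_mul zero_le_two,
        Real.rpow_logb two_pos (by norm_num) (by linarith), Real.rpow_natCast]
    _ ≤ (y / x) ^ Real.logb 2 D :=
      Real.rpow_le_rpow (by positivity) hk_le (Real.logb_nonneg one_lt_two hD)
  have hmono : f (2 ^ (k + 1) * x) ≤ f y :=
    hanti hy (by simp only [mem_Ioi]; positivity) ((div_lt_iff₀ hx).mp hk_lt).le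
  calc f x ≤ D ^ (k + 1) * f (2 ^ (k + 1) * x) :=
        le_pow_mul_of_le_mul_two_mul (by linarith) hf hx (k + 1)
    _ ≤ D ^ (k + 1) * f y := mul_le_mul_of_nonneg_left hmono (by positivity)
    _ = D * D ^ k * f y := by ring
    _ ≤ D * (y / x) ^ Real.logb 2 D * f y := by
        gcongr
        exact hnonneg y hy

theorem one_sub_rpow_le_exp_neg {a x : ℝ} (ha : a ≤ 1) (hx : 0 ≤ x) :
    (1 - a) ^ x ≤ Real.exp (-(a * x)) := calc
  (1 - a) ^ x ≤ Real.exp (-a) ^ x :=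
    Real.rpow_le_rpow (by linarith) (Real.one_sub_le_exp_neg a) hx
  _ = Real.exp (-(a * x)) := by rw [← Real.exp_mul, neg_mul]

theorem half_le_one_sub_rpow_s7 {a y : ℝ} (ha₀ : 0 ≤ a) (ha : a ≤ 1 / 2) (hy : 0 ≤ y)
    (hya : y * a ≤ 1 / 2) : 1 / 2 ≤ (1 - a) ^ y := by
  rcases le_total y 1 with hy1 | hy1
  · calc 1 / 2 ≤ (1 - a) ^ (1 : ℝ) := by rw [Real.rpow_one]; linarith
      _ ≤ (1 - a) ^ y := Real.rpow_le_rpow_of_exponent_ge' (by linarith) (by linarith) hy hy1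
  · have bernoulli := one_add_mul_self_le_rpow_one_add (s := -a) (by linarith) hy1
    rw [← sub_eq_add_neg] at bernoulli
    linarith

theorem pow_mul_exp_neg_two_pow_le {c : ℝ} {p : ℕ} (hc : 0 ≤ c) (hp : 2 * c ≤ 2 ^ p) (k : ℕ) :
    c ^ k * Real.exp (-2 ^ k) ≤ p.factorial * (1 / 2) ^ k := by
  have hexp : ((2 : ℝ) ^ k) ^ p ≤ p.factorial * Real.exp (2 ^ k) := by
    have := Real.pow_div_factorial_le_exp (2 ^ k) (by positivity) p
    rwa [div_le_iff₀ (by positivity), mul_comm] at this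
  rw [Real.exp_neg, ← div_eq_mul_inv, div_le_iff₀ (Real.exp_pos _)]
  calc c ^ k = (1 / 2) ^ k * (2 * c) ^ k := by rw [← mul_pow]; ring
    _ ≤ (1 / 2) ^ k * ((2 : ℝ) ^ k) ^ p := by
        rw [← pow_mul, mul_comm k, pow_mul]
        gcongr
    _ ≤ (1 / 2) ^ k * (p.factorial * Real.exp (2 ^ k)) := by gcongr
    _ = p.factorial * (1 / 2) ^ k * Real.exp (2 ^ k) := by ring

namespace DoublingWeight

noncomputable def dyadicPoint (j : ℕ) : ℝ := 1 - 2⁻¹ ^ j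

def tailMass (ω : Measure ℝ) (r : ℝ) : ℝ := (ω (Ico r 1)).toReal

noncomputable def moment (ω : Measure ℝ) (x : ℝ) : ℝ := ∫ r in Ico (0 : ℝ) 1, r ^ x ∂ω

theorem dyadicPoint_nonneg (j : ℕ) : 0 ≤ dyadicPoint j :=
  sub_nonneg.mpr (pow_le_one₀ (by norm_num) (by norm_num))

theorem dyadicPoint_lt_one (j : ℕ) : dyadicPoint j < 1 :=
  sub_lt_self 1 (by positivity)

theorem dyadicPoint_mono : Monotone dyadicPoint := fun _ _ h =>
  sub_le_sub_left (pow_le_pow_of_le_one (by norm_num) (by norm_num) h) 1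

theorem one_add_dyadicPoint_div_two (j : ℕ) : (1 + dyadicPoint j) / 2 = dyadicPoint (j + 1) := by
  simp only [dyadicPoint, pow_succ]; ring

theorem moment_nonneg (ω : Measure ℝ) (x : ℝ) : 0 ≤ moment ω x :=
  setIntegral_nonneg measurableSet_Ico fun _ hr => Real.rpow_nonneg hr.1 x

section

variable (ω : Measure ℝ) [IsFiniteMeasure ω]

theorem integrableOn_rpow {x : ℝ} (hx : 0 ≤ x) {s : Set ℝ} (hs : s ⊆ Ico 0 1) :
    IntegrableOn (fun r : ℝ => r ^ x) s ω := by
  refine IntegrableOn.mono_set ?_ hs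
  refine Measure.integrableOn_of_bounded (M := 1) (measure_ne_top ω _)
    (by fun_prop : Measurable fun r : ℝ => r ^ x).aestronglyMeasurable ?_
  filter_upwards [ae_restrict_mem measurableSet_Ico] with r hr
  rw [Real.norm_eq_abs, abs_of_nonneg (Real.rpow_nonneg hr.1 x)]
  exact Real.rpow_le_one hr.1 hr.2.le hx

theorem setIntegral_Ico_rpow_le {a b x : ℝ} (ha : 0 ≤ a) (hb : b ≤ 1) (hx : 0 ≤ x) :
    ∫ r in Ico a b, r ^ x ∂ω ≤ b ^ x * (ω (Ico a b)).toReal := calc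
  ∫ r in Ico a b, r ^ x ∂ω ≤ ∫ _ in Ico a b, b ^ x ∂ω :=
    setIntegral_mono_on (integrableOn_rpow ω hx (Ico_subset_Ico ha hb))
      (integrableOn_const (measure_ne_top _ _) enorm_ne_top) measurableSet_Ico
      fun r hr => Real.rpow_le_rpow (ha.trans hr.1) hr.2.le hx
  _ = b ^ x * (ω (Ico a b)).toReal := by
    rw [setIntegral_const, smul_eq_mul, mul_comm, measureReal_def]

theorem moment_antitoneOn : AntitoneOn (moment ω) (Ici 0) := fun _ hx _ _ hxy =>
  setIntegral_mono_on (integrableOn_rpow ω (le_trans hx hxy) subset_rfl)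
    (integrableOn_rpow ω hx subset_rfl) measurableSet_Ico
    fun _ hr => Real.rpow_le_rpow_of_exponent_ge' hr.1 hr.2.le hx hxy

theorem moment_le_sum_add_setIntegral {x : ℝ} (hx : 0 ≤ x) (m : ℕ) :
    moment ω x ≤ ∑ j ∈ Finset.range m, dyadicPoint (j + 1) ^ x * tailMass ω (dyadicPoint j)
      + ∫ r in Ico (dyadicPoint m) 1, r ^ x ∂ω := by
  induction m with
  | zero => simp [moment, dyadicPoint]
  | succ m ih =>
    set t := dyadicPoint
    have hsplit : ∫ r in Ico (t m) 1, r ^ x ∂ω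
        = (∫ r in Ico (t m) (t (m + 1)), r ^ x ∂ω) + ∫ r in Ico (t (m + 1)) 1, r ^ x ∂ω := by
      rw [← setIntegral_union Ico_disjoint_Ico_same measurableSet_Ico
        (integrableOn_rpow ω hx (Ico_subset_Ico (dyadicPoint_nonneg m) (dyadicPoint_lt_one _).le))
        (integrableOn_rpow ω hx (Ico_subset_Ico_left (dyadicPoint_nonneg _))),
        Ico_union_Ico_eq_Ico (dyadicPoint_mono m.le_succ) (dyadicPoint_lt_one _).le]
    have hlayer : ∫ r in Ico (t m) (t (m + 1)), r ^ x ∂ω ≤ t (m + 1) ^ x * tailMass ω (t m) :=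
      (setIntegral_Ico_rpow_le ω (dyadicPoint_nonneg m) (dyadicPoint_lt_one _).le hx).trans <|
        mul_le_mul_of_nonneg_left (measureReal_mono (Ico_subset_Ico_right
          (dyadicPoint_lt_one _).le)) (Real.rpow_nonneg (dyadicPoint_nonneg _) x)
    rw [Finset.sum_range_succ]
    linarith

theorem tailMass_le_two_mul_moment {n : ℕ} {y : ℝ} (hy : 0 ≤ y) (hn : (2⁻¹ : ℝ) ^ n ≤ 1 / 2)
    (hyn : y * 2⁻¹ ^ n ≤ 1 / 2) : tailMass ω (dyadicPoint n) ≤ 2 * moment ω y := by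
  have hsub : Ico (dyadicPoint n) 1 ⊆ Ico 0 1 := Ico_subset_Ico_left (dyadicPoint_nonneg n)
  have hlower : 1 / 2 * tailMass ω (dyadicPoint n) ≤ ∫ r in Ico (dyadicPoint n) 1, r ^ y ∂ω :=
    calc 1 / 2 * tailMass ω (dyadicPoint n) = ∫ _ in Ico (dyadicPoint n) 1, (1 / 2 : ℝ) ∂ω := by
          rw [setIntegral_const, smul_eq_mul, mul_comm, measureReal_def, tailMass]
      _ ≤ ∫ r in Ico (dyadicPoint n) 1, r ^ y ∂ω :=
          setIntegral_mono_on (integrableOn_const (measure_ne_top _ _) enorm_ne_top)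
            (integrableOn_rpow ω hy hsub) measurableSet_Ico fun r hr =>
            (half_le_one_sub_rpow_s7 (by positivity) hn hy hyn).trans
              (Real.rpow_le_rpow (dyadicPoint_nonneg n) hr.1 hy)
  have htail : ∫ r in Ico (dyadicPoint n) 1, r ^ y ∂ω ≤ moment ω y :=
    setIntegral_mono_set (integrableOn_rpow ω hy subset_rfl)
      (ae_restrict_of_forall_mem measurableSet_Ico fun _ hr => Real.rpow_nonneg hr.1 y)
      hsub.eventuallyLE
  linarith

end

def TailDoubling (ω : Measure ℝ) (C₀ : ℝ) : Prop :=
  ∀ r : ℝ, 0 ≤ r → r < 1 → tailMass ω r ≤ C₀ * tailMass ω ((1 + r) / 2)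

theorem TailDoubling.tailMass_le_pow_mul {ω : Measure ℝ} {C₀ : ℝ} (hdoub : TailDoubling ω C₀)
    (hC₀ : 0 ≤ C₀) (j k : ℕ) :
    tailMass ω (dyadicPoint j) ≤ C₀ ^ k * tailMass ω (dyadicPoint (j + k)) := by
  induction k with
  | zero => simp
  | succ k ih =>
    have hstep := hdoub _ (dyadicPoint_nonneg (j + k)) (dyadicPoint_lt_one _)
    rw [one_add_dyadicPoint_div_two] at hstep
    calc tailMass ω (dyadicPoint j) ≤ C₀ ^ k * tailMass ω (dyadicPoint (j + k)) := ih
      _ ≤ C₀ ^ k * (C₀ * tailMass ω (dyadicPoint (j + k + 1))) := by gcongr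
      _ = C₀ ^ (k + 1) * tailMass ω (dyadicPoint (j + (k + 1))) := by ring_nf

theorem exists_sum_rpow_mul_pow_le {C₀ : ℝ} (hC₀ : 0 ≤ C₀) : ∃ K, 0 ≤ K ∧
    ∀ (m : ℕ) (x : ℝ), 2 ^ m ≤ x →
      ∑ j ∈ Finset.range m, dyadicPoint (j + 1) ^ x * C₀ ^ (m - j) ≤ K := by
  obtain ⟨p, hp⟩ : ∃ p : ℕ, 2 * C₀ < 2 ^ p := pow_unbounded_of_one_lt _ one_lt_two
  refine ⟨C₀ * p.factorial * 2, by positivity, fun m x hx => ?_⟩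
  have hterm : ∀ j ∈ Finset.range m,
      dyadicPoint (j + 1) ^ x * C₀ ^ (m - j) ≤ C₀ * p.factorial * (1 / 2) ^ (m - 1 - j) := by
    intro j hj
    obtain ⟨k, rfl⟩ : ∃ k, m = j + 1 + k := ⟨m - 1 - j, by simp at hj; omega⟩
    rw [show j + 1 + k - j = k + 1 by omega, show j + 1 + k - 1 - j = k by omega]
    have hexponent : (2 : ℝ) ^ k ≤ 2⁻¹ ^ (j + 1) * x := by
      rw [inv_pow, ← div_eq_inv_mul, le_div_iff₀ (by positivity), ← pow_add, add_comm]
      exact hx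
    have hdecay : dyadicPoint (j + 1) ^ x ≤ Real.exp (-2 ^ k) :=
      (one_sub_rpow_le_exp_neg (pow_le_one₀ (by norm_num) (by norm_num))
        ((by positivity : (0 : ℝ) ≤ 2 ^ (j + 1 + k)).trans hx)).trans
        (Real.exp_le_exp.mpr (neg_le_neg hexponent))
    calc dyadicPoint (j + 1) ^ x * C₀ ^ (k + 1) ≤ Real.exp (-2 ^ k) * C₀ ^ (k + 1) := by gcongr
      _ = C₀ * (C₀ ^ k * Real.exp (-2 ^ k)) := by ring
      _ ≤ C₀ * (p.factorial * (1 / 2) ^ k) :=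
          mul_le_mul_of_nonneg_left (pow_mul_exp_neg_two_pow_le hC₀ hp.le k) hC₀
      _ = C₀ * p.factorial * (1 / 2) ^ k := by ring
  calc ∑ j ∈ Finset.range m, dyadicPoint (j + 1) ^ x * C₀ ^ (m - j)
      ≤ ∑ j ∈ Finset.range m, C₀ * p.factorial * (1 / 2) ^ (m - 1 - j) := Finset.sum_le_sum hterm
    _ = C₀ * p.factorial * ∑ j ∈ Finset.range m, (1 / 2 : ℝ) ^ j := by
        rw [← Finset.mul_sum, Finset.sum_range_reflect (fun j => (1 / 2 : ℝ) ^ j) m]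
    _ ≤ C₀ * p.factorial * 2 := by gcongr; exact sum_geometric_two_le m

variable {ω : Measure ℝ} [IsFiniteMeasure ω] {C₀ : ℝ}

theorem TailDoubling.exists_moment_le_mul_tailMass (hdoub : TailDoubling ω C₀) (hC₀ : 0 ≤ C₀) :
    ∃ K, 1 ≤ K ∧ ∀ (m : ℕ) (x : ℝ), 2 ^ m ≤ x →
      moment ω x ≤ K * tailMass ω (dyadicPoint m) := by
  obtain ⟨K, hK, hsum⟩ := exists_sum_rpow_mul_pow_le hC₀
  refine ⟨K + 1, by linarith, fun m x hx => ?_⟩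
  have hx₀ : 0 ≤ x := (by positivity : (0 : ℝ) ≤ 2 ^ m).trans hx
  have hlayers : ∑ j ∈ Finset.range m, dyadicPoint (j + 1) ^ x * tailMass ω (dyadicPoint j)
      ≤ K * tailMass ω (dyadicPoint m) := calc
    _ ≤ ∑ j ∈ Finset.range m,
          dyadicPoint (j + 1) ^ x * C₀ ^ (m - j) * tailMass ω (dyadicPoint m) := by
        refine Finset.sum_le_sum fun j hj => ?_
        have hdoub_iter := hdoub.tailMass_le_pow_mul hC₀ j (m - j)
        rw [show j + (m - j) = m by simp at hj; omega] at hdoub_iter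
        rw [mul_assoc]
        exact mul_le_mul_of_nonneg_left hdoub_iter (Real.rpow_nonneg (dyadicPoint_nonneg _) x)
    _ = (∑ j ∈ Finset.range m, dyadicPoint (j + 1) ^ x * C₀ ^ (m - j))
          * tailMass ω (dyadicPoint m) := (Finset.sum_mul ..).symm
    _ ≤ K * tailMass ω (dyadicPoint m) :=
        mul_le_mul_of_nonneg_right (hsum m x hx) ENNReal.toReal_nonneg
  have htail : ∫ r in Ico (dyadicPoint m) 1, r ^ x ∂ω ≤ tailMass ω (dyadicPoint m) := by
    simpa [tailMass] using setIntegral_Ico_rpow_le ω (dyadicPoint_nonneg m) le_rfl hx₀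
  linarith [moment_le_sum_add_setIntegral ω hx₀ m]

theorem TailDoubling.exists_moment_le_mul_moment_two_mul (hdoub : TailDoubling ω C₀)
    (hC₀ : 1 ≤ C₀) : ∃ D, 1 < D ∧ ∀ x, 0 < x → moment ω x ≤ D * moment ω (2 * x) := by
  obtain ⟨K, hK, hupper⟩ := hdoub.exists_moment_le_mul_tailMass (by linarith)
  refine ⟨2 * (K * C₀ ^ 3), by nlinarith [one_le_pow₀ (n := 3) hC₀], fun x hx => ?_⟩
  obtain ⟨m, hm, hxm⟩ : ∃ m : ℕ,
      moment ω x ≤ K * tailMass ω (dyadicPoint m) ∧ x < 2 ^ (m + 1) := by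
    rcases lt_or_ge x 1 with hx1 | hx1
    · refine ⟨0, ?_, by norm_num; linarith⟩
      have hbound : moment ω x ≤ 1 ^ x * tailMass ω 0 :=
        setIntegral_Ico_rpow_le ω le_rfl le_rfl hx.le
      rw [Real.one_rpow, one_mul] at hbound
      simp only [dyadicPoint, pow_zero, sub_self]
      exact hbound.trans (le_mul_of_one_le_left ENNReal.toReal_nonneg hK)
    · obtain ⟨m, hm, hxm⟩ := exists_nat_pow_near hx1 one_lt_two
      exact ⟨m, hupper m x hm, hxm⟩
  have hlower : tailMass ω (dyadicPoint (m + 3)) ≤ 2 * moment ω (2 * x) := by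
    refine tailMass_le_two_mul_moment ω (by positivity) ?_ ?_
    · exact (pow_le_pow_of_le_one (by norm_num) (by norm_num) (by omega : 1 ≤ m + 3)).trans_eq
        (by norm_num)
    · rw [inv_pow, ← div_eq_mul_inv, div_le_iff₀ (by positivity)]
      have : (2 : ℝ) ^ (m + 3) = 4 * 2 ^ (m + 1) := by ring
      linarith
  calc moment ω x ≤ K * tailMass ω (dyadicPoint m) := hm
    _ ≤ K * (C₀ ^ 3 * tailMass ω (dyadicPoint (m + 3))) := by
        gcongr; exact hdoub.tailMass_le_pow_mul (by linarith) m 3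
    _ ≤ K * (C₀ ^ 3 * (2 * moment ω (2 * x))) := by gcongr
    _ = 2 * (K * C₀ ^ 3) * moment ω (2 * x) := by ring

end DoublingWeight

theorem stmt_7_general (ω : Measure ℝ) [IsFiniteMeasure ω] (C₀ : ℝ) (hC₀ : 1 ≤ C₀)
    (hdoub : ∀ r : ℝ, 0 ≤ r → r < 1 →
      (ω (Ico r 1)).toReal ≤ C₀ * (ω (Ico ((1 + r) / 2) 1)).toReal) :
    ∃ C η : ℝ, 0 < C ∧ 0 < η ∧ ∀ x y : ℝ, 0 < x → x ≤ y →
      (∫ r in Ico (0 : ℝ) 1, r ^ x ∂ω) ≤ C * (y / x) ^ η * (∫ r in Ico (0 : ℝ) 1, r ^ y ∂ω) := by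
  obtain ⟨D, hD, hmoment⟩ :=
    DoublingWeight.TailDoubling.exists_moment_le_mul_moment_two_mul (ω := ω) hdoub hC₀
  refine ⟨D, Real.logb 2 D, by linarith, Real.logb_pos one_lt_two hD, fun x y hx hxy => ?_⟩
  exact le_mul_rpow_mul_of_le_mul_two_mul hD.le
    ((DoublingWeight.moment_antitoneOn ω).mono Ioi_subset_Ici_self)
    (fun y _ => DoublingWeight.moment_nonneg ω y) hmoment hx hxy

theorem stmt_7 (ω : Measure ℝ) [IsFiniteMeasure ω] (C₀ : ℝ) (hC₀ : 1 ≤ C₀)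
    (hdoub : ∀ r : ℝ, 0 ≤ r → r < 1 →
      (ω (Ico r 1)).toReal ≤ C₀ * (ω (Ico ((1 + r) / 2) 1)).toReal)
    (hcero : (ω (Ico (0 : ℝ) 1)).toReal ≤ C₀ * (ω (Ico (1 / 2 : ℝ) 1)).toReal) :
    ∃ C η : ℝ, 0 < C ∧ 0 < η ∧ ∀ x y : ℝ, 0 < x → x ≤ y →
      (∫ r in Ico (0 : ℝ) 1, r ^ x ∂ω) ≤ C * (y / x) ^ η * (∫ r in Ico (0 : ℝ) 1, r ^ y ∂ω) :=
  stmt_7_general ω C₀ hC₀ hdoub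
end

section
/- Let ω be a finite positive Borel measure on [0,1) satisfying ω̂(0) ≤ C₀·ω̂(1/2), and suppose there exists C > 0 such that the moments satisfy ω_n ≤ C·ω_{2n} for all positive integers n, where ω_x = ∫₀¹ r^x dω(r). Then there exists C' > 0 such that ∫₀¹ s^x dω(s) ≤ C'·ω̂(1-1/x) for all x ≥ 1. -/
/-!
Split the moment of order `2^k n` at `a = 1 - 1/n`: below `a` the integrand is at most
`a^((2^k - 1) n) r^n ≤ 2^(1 - 2^k) r^n`, above `a` it is at most `1`. Iterating the doubling
condition `k` times gives
`ω_n ≤ C^k ω_(2^k n) ≤ C^k 2^(1 - 2^k) ω_n + C^k ω̂(1 - 1/n)`,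
and since `2^k` outgrows `k log₂ C`, a suitable `k` absorbs the first term:
`ω_n ≤ 2 C^k ω̂(1 - 1/n)`. A real exponent `x` is reduced to `n = ⌊x⌋` and one more doubling
step, as `2n ≥ x`.
-/

open MeasureTheory Set

lemma le_pow_mul_of_le_mul_two {f : ℕ → ℝ} {C : ℝ} (hC : 0 ≤ C)
    (hf : ∀ n, 1 ≤ n → f n ≤ C * f (2 * n)) (k : ℕ) {n : ℕ} (hn : 1 ≤ n) :
    f n ≤ C ^ k * f (2 ^ k * n) := by
  induction k with
  | zero => simp
  | succ k ih =>
    calc f n ≤ C ^ k * f (2 ^ k * n) := ih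
      _ ≤ C ^ k * (C * f (2 * (2 ^ k * n))) := by
          gcongr
          exact hf _ (Nat.mul_pos (Nat.two_pow_pos k) hn)
      _ = C ^ (k + 1) * f (2 ^ (k + 1) * n) := by ring_nf

lemma one_sub_inv_pow_le_half {n : ℕ} (hn : 1 ≤ n) : (1 - 1 / n : ℝ) ^ n ≤ 1 / 2 := by
  calc (1 - 1 / n : ℝ) ^ n ≤ Real.exp (-1) :=
        Real.one_sub_div_pow_le_exp_neg (by exact_mod_cast hn)
    _ ≤ 1 / 2 := by
      rw [Real.exp_neg, one_div]
      exact inv_anti₀ two_pos (by linarith [Real.add_one_le_exp (1 : ℝ)])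

lemma exists_pow_mul_half_pow_le_half {C : ℝ} (hC : 0 ≤ C) :
    ∃ k : ℕ, C ^ k * (1 / 2 : ℝ) ^ (2 ^ k - 1) ≤ 1 / 2 := by
  obtain ⟨N, hN⟩ := pow_unbounded_of_one_lt C one_lt_two
  -- `k = 4N + 2` makes `2 ^ k = (2 ^ (2N + 1)) ^ 2 ≥ (2N + 2) ^ 2` exceed `N k + 2`
  have hk : N * (4 * N + 2) + 1 ≤ 2 ^ (4 * N + 2) - 1 := by
    have hsq : (2 * N + 2) ^ 2 ≤ 2 ^ (4 * N + 2) := by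
      rw [show 4 * N + 2 = (2 * N + 1) * 2 by ring, pow_mul]
      exact Nat.pow_le_pow_left Nat.lt_two_pow_self 2
    have : N * (4 * N + 2) + 2 ≤ (2 * N + 2) ^ 2 := by nlinarith
    omega
  refine ⟨4 * N + 2, ?_⟩
  calc C ^ (4 * N + 2) * (1 / 2 : ℝ) ^ (2 ^ (4 * N + 2) - 1)
      ≤ (2 ^ N) ^ (4 * N + 2) * (1 / 2 : ℝ) ^ (N * (4 * N + 2) + 1) := by
        refine mul_le_mul (pow_le_pow_left₀ hC hN.le _)
          (pow_le_pow_of_le_one (by norm_num) (by norm_num) hk) (by positivity) (by positivity)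
    _ = 1 / 2 := by
        rw [← pow_mul, pow_succ, ← mul_assoc, ← mul_pow]
        norm_num

noncomputable def moment (ω : Measure ℝ) (m : ℕ) : ℝ := ∫ r in Ico (0 : ℝ) 1, r ^ m ∂ω

section Moments

variable (ω : Measure ℝ)

lemma moment_nonneg (m : ℕ) : 0 ≤ moment ω m :=
  setIntegral_nonneg measurableSet_Ico fun _ hr => pow_nonneg hr.1 m

lemma moment_eq_setIntegral_rpow (m : ℕ) :
    moment ω m = ∫ r in Ico (0 : ℝ) 1, r ^ (m : ℝ) ∂ω := by
  simp only [moment, Real.rpow_natCast]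

variable [IsFiniteMeasure ω]

lemma integrableOn_pow_Ico (m : ℕ) : IntegrableOn (fun r : ℝ => r ^ m) (Ico 0 1) ω := by
  refine Measure.integrableOn_of_bounded (M := 1) (measure_ne_top ω _)
    (continuous_pow m).aestronglyMeasurable ?_
  filter_upwards [ae_restrict_mem measurableSet_Ico] with r hr
  rw [Real.norm_eq_abs, abs_of_nonneg (pow_nonneg hr.1 _)]
  exact pow_le_one₀ hr.1 hr.2.le

lemma setIntegral_rpow_le_moment {x : ℝ} {n : ℕ} (hnx : (n : ℝ) ≤ x) :
    ∫ r in Ico (0 : ℝ) 1, r ^ x ∂ω ≤ moment ω n := by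
  rw [moment_eq_setIntegral_rpow]
  refine integral_mono_of_nonneg ?_ ((integrableOn_pow_Ico ω n).congr_fun
    (fun r _ => (Real.rpow_natCast r n).symm) measurableSet_Ico) ?_
  · filter_upwards [ae_restrict_mem measurableSet_Ico] with r hr
    exact Real.rpow_nonneg hr.1 x
  · filter_upwards [ae_restrict_mem measurableSet_Ico] with r hr
    exact Real.rpow_le_rpow_of_exponent_ge' hr.1 hr.2.le n.cast_nonneg hnx

lemma moment_le_pow_mul_moment_add {a : ℝ} (ha₀ : 0 ≤ a) {m n : ℕ} (hnm : n ≤ m) :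
    moment ω m ≤ a ^ (m - n) * moment ω n + ω.real (Ico a 1) := by
  have hbound : ∀ r ∈ Ico (0 : ℝ) 1,
      r ^ m ≤ a ^ (m - n) * r ^ n + (Ico a 1).indicator 1 r := by
    intro r hr
    by_cases hra : r < a
    · rw [indicator_of_notMem (fun h => (not_le.2 hra) h.1), add_zero,
        ← Nat.sub_add_cancel hnm, pow_add, Nat.add_sub_cancel]
      exact mul_le_mul_of_nonneg_right (pow_le_pow_left₀ hr.1 hra.le _) (pow_nonneg hr.1 n)
    · rw [indicator_of_mem (show r ∈ Ico a 1 from ⟨not_lt.1 hra, hr.2⟩), Pi.one_apply]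
      have := pow_le_one₀ hr.1 hr.2.le (n := m)
      have := mul_nonneg (pow_nonneg ha₀ (m - n)) (pow_nonneg hr.1 n)
      linarith
  have hind : IntegrableOn ((Ico a 1).indicator (1 : ℝ → ℝ)) (Ico 0 1) ω :=
    (integrableOn_const (measure_ne_top ω _)).indicator measurableSet_Ico
  calc moment ω m
      ≤ ∫ r in Ico (0 : ℝ) 1, (a ^ (m - n) * r ^ n + (Ico a 1).indicator 1 r) ∂ω :=
        setIntegral_mono_on (integrableOn_pow_Ico ω m)
          (((integrableOn_pow_Ico ω n).const_mul _).add hind) measurableSet_Ico hbound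
    _ = a ^ (m - n) * moment ω n + ω.real (Ico a 1) := by
        rw [integral_add ((integrableOn_pow_Ico ω n).const_mul _) hind, integral_const_mul,
          integral_indicator_one measurableSet_Ico, measureReal_restrict_apply measurableSet_Ico,
          inter_eq_left.2 (Ico_subset_Ico_left ha₀), moment]

lemma exists_moment_le_mul_measureReal {C : ℝ} (hC : 0 ≤ C)
    (hmom : ∀ n, 1 ≤ n → moment ω n ≤ C * moment ω (2 * n)) :
    ∃ k : ℕ, ∀ n, 1 ≤ n → moment ω n ≤ 2 * C ^ k * ω.real (Ico (1 - 1 / n) 1) := by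
  obtain ⟨k, hk⟩ := exists_pow_mul_half_pow_le_half hC
  refine ⟨k, fun n hn => ?_⟩
  set a : ℝ := 1 - 1 / n
  have ha₀ : 0 ≤ a := sub_nonneg.2 (div_le_one_of_le₀ (by exact_mod_cast hn) n.cast_nonneg)
  have hdecay : a ^ (2 ^ k * n - n) ≤ (1 / 2) ^ (2 ^ k - 1) := by
    rw [← Nat.sub_one_mul, mul_comm, pow_mul]
    exact pow_le_pow_left₀ (pow_nonneg ha₀ n) (one_sub_inv_pow_le_half hn) _
  have hJ := moment_nonneg ω n
  have hsplit : moment ω n ≤ C ^ k * (a ^ (2 ^ k * n - n) * moment ω n + ω.real (Ico a 1)) :=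
    (le_pow_mul_of_le_mul_two hC hmom k hn).trans <| by
      gcongr
      exact moment_le_pow_mul_moment_add ω ha₀ (Nat.le_mul_of_pos_left n (Nat.two_pow_pos k))
  have hhalf : C ^ k * (a ^ (2 ^ k * n - n) * moment ω n) ≤ 1 / 2 * moment ω n :=
    calc C ^ k * (a ^ (2 ^ k * n - n) * moment ω n)
        ≤ C ^ k * (1 / 2) ^ (2 ^ k - 1) * moment ω n := by
          rw [← mul_assoc]
          gcongr
      _ ≤ 1 / 2 * moment ω n := by gcongr
  linarith

end Moments

theorem stmt_8_general (ω : Measure ℝ) [IsFiniteMeasure ω] (C : ℝ) (hC : 0 < C)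
    (hmom : ∀ n : ℕ, 1 ≤ n →
      (∫ r in Ico (0 : ℝ) 1, r ^ (n : ℝ) ∂ω) ≤ C * (∫ r in Ico (0 : ℝ) 1, r ^ (2 * n : ℝ) ∂ω)) :
    ∃ C' : ℝ, 0 < C' ∧ ∀ x : ℝ, 1 ≤ x →
      (∫ s in Ico (0 : ℝ) 1, s ^ x ∂ω) ≤ C' * (ω (Ico (1 - 1 / x) 1)).toReal := by
  have hmom' : ∀ n, 1 ≤ n → moment ω n ≤ C * moment ω (2 * n) := fun n hn => by
    simpa only [moment_eq_setIntegral_rpow, Nat.cast_mul, Nat.cast_ofNat] using hmom n hn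
  obtain ⟨k, hk⟩ := exists_moment_le_mul_measureReal ω hC.le hmom'
  refine ⟨C * (2 * C ^ k), by positivity, fun x hx => ?_⟩
  have hx₀ : 0 < x := one_pos.trans_le hx
  have hn : 1 ≤ ⌊x⌋₊ := Nat.le_floor (by exact_mod_cast hx)
  have hx₂ : x ≤ 2 * ⌊x⌋₊ := by
    have := Nat.lt_floor_add_one x
    have : (1 : ℝ) ≤ ⌊x⌋₊ := by exact_mod_cast hn
    linarith
  calc ∫ s in Ico (0 : ℝ) 1, s ^ x ∂ω
      ≤ moment ω ⌊x⌋₊ := setIntegral_rpow_le_moment ω (Nat.floor_le hx₀.le)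
    _ ≤ C * moment ω (2 * ⌊x⌋₊) := hmom' _ hn
    _ ≤ C * (2 * C ^ k * ω.real (Ico (1 - 1 / (2 * ⌊x⌋₊ : ℕ)) 1)) := by
        gcongr
        exact hk _ (by omega)
    _ = C * (2 * C ^ k) * ω.real (Ico (1 - 1 / (2 * ⌊x⌋₊ : ℕ)) 1) := by ring
    _ ≤ C * (2 * C ^ k) * ω.real (Ico (1 - 1 / x) 1) := by
        refine mul_le_mul_of_nonneg_left (measureReal_mono (Ico_subset_Ico_left ?_))
          (by positivity)
        push_cast
        exact sub_le_sub_left (one_div_le_one_div_of_le hx₀ hx₂) 1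

theorem stmt_8 (ω : Measure ℝ) [IsFiniteMeasure ω] (C₀ C : ℝ) (hC₀ : 0 < C₀) (hC : 0 < C)
    (hcero : (ω (Ico (0 : ℝ) 1)).toReal ≤ C₀ * (ω (Ico (1 / 2 : ℝ) 1)).toReal)
    (hmom : ∀ n : ℕ, 1 ≤ n →
      (∫ r in Ico (0 : ℝ) 1, r ^ (n : ℝ) ∂ω) ≤ C * (∫ r in Ico (0 : ℝ) 1, r ^ (2 * n : ℝ) ∂ω)) :
    ∃ C' : ℝ, 0 < C' ∧ ∀ x : ℝ, 1 ≤ x →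
      (∫ s in Ico (0 : ℝ) 1, s ^ x ∂ω) ≤ C' * (ω (Ico (1 - 1 / x) 1)).toReal :=
  stmt_8_general ω C hC hmom
end

section
/- Let ω be a finite positive Borel measure on [0,1) with ω̂ doubling. Then ω*(r) ≍ ω̂(r)(1-r) for r ∈ [1/2, 1), where ω*(r) = ∫_r¹ log(s/r) s dω(s); more precisely, ω*(r) ≤ ω̂(r)(1-r)/r always holds, and the doubling property gives a constant c > 0 with ω*(r) ≥ c·ω̂(r)(1-r) for r ≥ 1/2. -/
/-!
Both bounds come from the elementary estimates `1 - r/s ≤ log (s/r) ≤ s/r - 1`, which give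
`s - r ≤ log (s/r) * s ≤ (1 - r)/r` for `r ≤ s ≤ 1`. Integrating the upper bound over `[r, 1)`
gives the first claim. For the second, the integrand is at least `(1 - r)/2` on `[(1 + r)/2, 1)`,
and doubling bounds `ω̂(r)` by `C · ω̂((1 + r)/2)`.
-/

open MeasureTheory Set Real

section Pointwise

variable {r s : ℝ}

lemma sub_le_log_div_mul_self (hr : 0 < r) (hs : 0 < s) : s - r ≤ log (s / r) * s := by
  have h := one_sub_inv_le_log_of_pos (div_pos hs hr)
  rw [inv_div] at h
  calc s - r = (1 - r / s) * s := by field_simp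
    _ ≤ log (s / r) * s := mul_le_mul_of_nonneg_right h hs.le

lemma log_div_mul_self_nonneg (hr : 0 < r) (hrs : r ≤ s) : 0 ≤ log (s / r) * s :=
  (sub_nonneg.2 hrs).trans (sub_le_log_div_mul_self hr (hr.trans_le hrs))

lemma log_div_mul_self_le (hr : 0 < r) (hrs : r ≤ s) (hs1 : s ≤ 1) :
    log (s / r) * s ≤ (1 - r) / r := by
  have hlog_nonneg : 0 ≤ log (s / r) := log_nonneg ((one_le_div hr).2 hrs)
  calc log (s / r) * s ≤ log (s / r) := mul_le_of_le_one_right hlog_nonneg hs1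
    _ ≤ s / r - 1 := log_le_sub_one_of_pos (div_pos (hr.trans_le hrs) hr)
    _ = (s - r) / r := by field_simp
    _ ≤ (1 - r) / r := by gcongr

end Pointwise

section Integral

variable {μ : Measure ℝ} [IsFiniteMeasure μ] {r : ℝ}

lemma integrableOn_log_div_mul_self (hr : 0 < r) :
    IntegrableOn (fun s => log (s / r) * s) (Ico r 1) μ := by
  refine Measure.integrableOn_of_bounded (M := (1 - r) / r) (measure_ne_top _ _)
    (by fun_prop) ?_
  filter_upwards [ae_restrict_mem measurableSet_Ico] with s hs
  rw [Real.norm_of_nonneg (log_div_mul_self_nonneg hr hs.1)]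
  exact log_div_mul_self_le hr hs.1 hs.2.le

lemma setIntegral_log_div_mul_self_le (hr : 0 < r) :
    ∫ s in Ico r 1, log (s / r) * s ∂μ ≤ (μ (Ico r 1)).toReal * (1 - r) / r := by
  calc ∫ s in Ico r 1, log (s / r) * s ∂μ ≤ ∫ _ in Ico r 1, (1 - r) / r ∂μ :=
        setIntegral_mono_on (integrableOn_log_div_mul_self hr)
          (integrableOn_const (measure_ne_top _ _)) measurableSet_Ico
          fun s hs => log_div_mul_self_le hr hs.1 hs.2.le
    _ = (μ (Ico r 1)).toReal * (1 - r) / r := by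
        rw [setIntegral_const, smul_eq_mul, measureReal_def, mul_div_assoc]

lemma mul_measure_le_setIntegral_log_div_mul_self (hr : 0 < r) (hr1 : r ≤ 1) :
    (1 - r) / 2 * (μ (Ico ((1 + r) / 2) 1)).toReal ≤ ∫ s in Ico r 1, log (s / r) * s ∂μ := by
  have hsub : Ico ((1 + r) / 2) 1 ⊆ Ico r 1 := Ico_subset_Ico_left (by linarith)
  have hint := integrableOn_log_div_mul_self (μ := μ) hr
  calc (1 - r) / 2 * (μ (Ico ((1 + r) / 2) 1)).toReal
      ≤ ∫ s in Ico ((1 + r) / 2) 1, log (s / r) * s ∂μ :=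
        setIntegral_ge_of_const_le_real measurableSet_Ico (measure_ne_top _ _)
          (fun s hs => (by linarith [hs.1] : (1 - r) / 2 ≤ s - r).trans
            (sub_le_log_div_mul_self hr (by linarith [hs.1])))
          (hint.mono_set hsub)
    _ ≤ ∫ s in Ico r 1, log (s / r) * s ∂μ := by
        refine setIntegral_mono_set hint ?_ hsub.eventuallyLE
        filter_upwards [ae_restrict_mem measurableSet_Ico] with s hs
        exact log_div_mul_self_nonneg hr hs.1

end Integral

theorem stmt_9 (ω : Measure ℝ) [IsFiniteMeasure ω] (C : ℝ) (hC : 1 ≤ C)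
    (hdoub : ∀ r : ℝ, 0 ≤ r → r < 1 →
      (ω (Ico r 1)).toReal ≤ C * (ω (Ico ((1 + r) / 2) 1)).toReal) :
    (∀ r : ℝ, 1 / 2 ≤ r → r < 1 →
      (∫ s in Ico r 1, Real.log (s / r) * s ∂ω) ≤ (ω (Ico r 1)).toReal * (1 - r) / r) ∧
    ∃ c : ℝ, 0 < c ∧ ∀ r : ℝ, 1 / 2 ≤ r → r < 1 →
      c * ((ω (Ico r 1)).toReal * (1 - r)) ≤ (∫ s in Ico r 1, Real.log (s / r) * s ∂ω) := by
  have hC0 : 0 < C := zero_lt_one.trans_le hC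
  refine ⟨fun r hr _ => setIntegral_log_div_mul_self_le (by linarith),
    1 / (2 * C), by positivity, fun r hr hr1 => ?_⟩
  calc 1 / (2 * C) * ((ω (Ico r 1)).toReal * (1 - r))
      ≤ 1 / (2 * C) * (C * (ω (Ico ((1 + r) / 2) 1)).toReal * (1 - r)) := by
        gcongr
        exact hdoub r (by linarith) hr1
    _ = (1 - r) / 2 * (ω (Ico ((1 + r) / 2) 1)).toReal := by field_simp
    _ ≤ ∫ s in Ico r 1, log (s / r) * s ∂ω :=
        mul_measure_le_setIntegral_log_div_mul_self (by linarith) hr1.le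
end

section
/- Let ω be a finite positive Borel measure on [0,1) such that ω̂(0) ≤ C₀·ω̂(1/2) and there exists C > 0 with ω̂(r)(1-r) ≤ C·∫_{[r,1)}(s-r) dω(s) for all r ∈ [1/2,1). Then ω̂ is doubling: there exists C' such that ω̂(r) ≤ C'·ω̂((1+r)/2) for all r ∈ [0,1). -/
/-!
Splitting `∫_{[r,1)} (s - r) dω(s)` at a point `t ∈ [r, 1]` bounds it by
`(t - r) ω̂(r) + (1 - r) ω̂(t)`. For `t - r = (1 - r)/(2C + 1)` the hypothesis then gives
`ω̂(r) ≤ (2C + 1) ω̂(t)`, where `1 - t = q (1 - r)` with `q = 2C/(2C + 1) < 1`. Iterating `n` times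
with `qⁿ ≤ 1/2` yields doubling on `[1/2, 1)`, and `ω̂(0) ≤ C₀ ω̂(1/2)` extends it to `[0, 1)`.
-/

open MeasureTheory Set

section Tail

variable {μ : Measure ℝ} [IsFiniteMeasure μ]

theorem antitone_measureReal_Ico (b : ℝ) : Antitone fun r => μ.real (Ico r b) :=
  fun _ _ hrs => measureReal_mono (Ico_subset_Ico_left hrs)

theorem setIntegral_Ico_sub_le {r t : ℝ} (hrt : r ≤ t) (ht1 : t ≤ 1) :
    ∫ s in Ico r 1, (s - r) ∂μ ≤ (t - r) * μ.real (Ico r 1) + (1 - r) * μ.real (Ico t 1) := by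
  have hint : IntegrableOn (fun s => s - r) (Ico r 1) μ :=
    ((continuous_id.sub continuous_const).integrableOn_Icc).mono_set Ico_subset_Icc_self
  have hleft : ∫ s in Ico r t, (s - r) ∂μ ≤ (t - r) * μ.real (Ico r 1) :=
    calc ∫ s in Ico r t, (s - r) ∂μ ≤ ∫ _ in Ico r t, (t - r) ∂μ :=
          setIntegral_mono_on (hint.mono_set (Ico_subset_Ico_right ht1)) integrableOn_const
            measurableSet_Ico fun s hs => by linarith [hs.2]
      _ = (t - r) * μ.real (Ico r t) := by rw [setIntegral_const, smul_eq_mul, mul_comm]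
      _ ≤ (t - r) * μ.real (Ico r 1) :=
          mul_le_mul_of_nonneg_left (measureReal_mono (Ico_subset_Ico_right ht1)) (by linarith)
  have hright : ∫ s in Ico t 1, (s - r) ∂μ ≤ (1 - r) * μ.real (Ico t 1) :=
    calc ∫ s in Ico t 1, (s - r) ∂μ ≤ ∫ _ in Ico t 1, (1 - r) ∂μ :=
          setIntegral_mono_on (hint.mono_set (Ico_subset_Ico_left hrt)) integrableOn_const
            measurableSet_Ico fun s hs => by linarith [hs.2]
      _ = (1 - r) * μ.real (Ico t 1) := by rw [setIntegral_const, smul_eq_mul, mul_comm]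
  rw [← Ico_union_Ico_eq_Ico hrt ht1, setIntegral_union Ico_disjoint_Ico_same measurableSet_Ico
    (hint.mono_set (Ico_subset_Ico_right ht1)) (hint.mono_set (Ico_subset_Ico_left hrt)),
    Ico_union_Ico_eq_Ico hrt ht1]
  linarith

theorem measureReal_Ico_mul_le_of_le_integral {C r t : ℝ} (hC : 0 ≤ C) (hrt : r ≤ t) (ht1 : t ≤ 1)
    (h : μ.real (Ico r 1) * (1 - r) ≤ C * ∫ s in Ico r 1, (s - r) ∂μ) :
    μ.real (Ico r 1) * (1 - r - C * (t - r)) ≤ C * (1 - r) * μ.real (Ico t 1) := by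
  have := mul_le_mul_of_nonneg_left (setIntegral_Ico_sub_le (μ := μ) hrt ht1) hC
  linarith

theorem measureReal_Ico_le_mul_of_le_integral {C r : ℝ} (hC : 0 < C) (hr1 : r < 1)
    (h : μ.real (Ico r 1) * (1 - r) ≤ C * ∫ s in Ico r 1, (s - r) ∂μ) :
    μ.real (Ico r 1) ≤ (2 * C + 1) * μ.real (Ico (1 - 2 * C / (2 * C + 1) * (1 - r)) 1) := by
  set t := 1 - 2 * C / (2 * C + 1) * (1 - r) with ht
  have hden : 0 < 2 * C + 1 := by linarith
  have hd : 0 < 1 - r := by linarith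
  have htr : t - r = (1 - r) / (2 * C + 1) := by rw [ht]; field_simp; ring
  have hrt : r ≤ t := by linarith [div_nonneg hd.le hden.le]
  have ht1 : t ≤ 1 := by linarith [show 0 ≤ 2 * C / (2 * C + 1) * (1 - r) by positivity]
  have hcoef : (2 * C + 1) * (1 - r - C * (t - r)) = (1 - r) * (C + 1) := by
    rw [htr]; field_simp; ring
  have hB : 0 ≤ μ.real (Ico t 1) := measureReal_nonneg
  refine le_of_mul_le_mul_right ?_ (mul_pos hd (by linarith : 0 < C + 1))
  calc μ.real (Ico r 1) * ((1 - r) * (C + 1))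
        = (2 * C + 1) * (μ.real (Ico r 1) * (1 - r - C * (t - r))) := by rw [← hcoef]; ring
    _ ≤ (2 * C + 1) * (C * (1 - r) * μ.real (Ico t 1)) :=
        mul_le_mul_of_nonneg_left (measureReal_Ico_mul_le_of_le_integral hC.le hrt ht1 h) hden.le
    _ ≤ (2 * C + 1) * μ.real (Ico t 1) * ((1 - r) * (C + 1)) := by
        nlinarith [mul_nonneg (mul_nonneg hden.le hd.le) hB]

end Tail

section Doubling

variable {f : ℝ → ℝ} {K q : ℝ}

theorem le_pow_mul_of_le_mul_contract (hK : 0 ≤ K) (hq0 : 0 < q) (hq1 : q ≤ 1)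
    (hstep : ∀ r ∈ Ico (1 / 2 : ℝ) 1, f r ≤ K * f (1 - q * (1 - r))) :
    ∀ n : ℕ, ∀ r ∈ Ico (1 / 2 : ℝ) 1, f r ≤ K ^ n * f (1 - q ^ n * (1 - r)) := by
  intro n
  induction n with
  | zero => intro r _; simp
  | succ n ih =>
    intro r hr
    have hqn : 0 < q ^ n := pow_pos hq0 n
    have hqn1 : q ^ n ≤ 1 := pow_le_one₀ hq0.le hq1
    have hs : 1 - q ^ n * (1 - r) ∈ Ico (1 / 2 : ℝ) 1 := by
      constructor <;> nlinarith [hr.1, hr.2]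
    calc f r ≤ K ^ n * f (1 - q ^ n * (1 - r)) := ih r hr
      _ ≤ K ^ n * (K * f (1 - q ^ (n + 1) * (1 - r))) := by
          rw [show 1 - q ^ (n + 1) * (1 - r) = 1 - q * (1 - (1 - q ^ n * (1 - r))) by ring]
          exact mul_le_mul_of_nonneg_left (hstep _ hs) (pow_nonneg hK n)
      _ = K ^ (n + 1) * f (1 - q ^ (n + 1) * (1 - r)) := by ring

theorem Antitone.exists_doubling_of_le_mul_contract (hf : Antitone f) (hK : 0 ≤ K) (hq0 : 0 < q)
    (hq1 : q < 1) (hstep : ∀ r ∈ Ico (1 / 2 : ℝ) 1, f r ≤ K * f (1 - q * (1 - r))) :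
    ∃ n : ℕ, ∀ r ∈ Ico (1 / 2 : ℝ) 1, f r ≤ K ^ n * f ((1 + r) / 2) := by
  obtain ⟨n, hn⟩ := exists_pow_lt_of_lt_one (by norm_num : (0 : ℝ) < 1 / 2) hq1
  refine ⟨n, fun r hr => (le_pow_mul_of_le_mul_contract hK hq0 hq1.le hstep n r hr).trans ?_⟩
  gcongr
  apply hf
  nlinarith [hr.2]

theorem Antitone.doubling_Ico_zero_one (hf : Antitone f) (hf0 : ∀ x, 0 ≤ f x) {C₀ D : ℝ}
    (hD : 0 ≤ D) (hzero : f 0 ≤ C₀ * f (1 / 2))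
    (hdoubling : ∀ r ∈ Ico (1 / 2 : ℝ) 1, f r ≤ D * f ((1 + r) / 2)) :
    ∀ r ∈ Ico (0 : ℝ) 1, f r ≤ max 1 C₀ * D * f ((1 + r) / 2) := by
  intro r hr
  have hmax : 0 ≤ max 1 C₀ := le_max_of_le_left zero_le_one
  rcases le_or_gt (1 / 2) r with hr2 | hr2
  · calc f r ≤ D * f ((1 + r) / 2) := hdoubling r ⟨hr2, hr.2⟩
      _ ≤ max 1 C₀ * D * f ((1 + r) / 2) := by
          rw [mul_assoc]
          exact le_mul_of_one_le_left (mul_nonneg hD (hf0 _)) (le_max_left _ _)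
  · calc f r ≤ f 0 := hf hr.1
      _ ≤ C₀ * f (1 / 2) := hzero
      _ ≤ max 1 C₀ * f (1 / 2) := mul_le_mul_of_nonneg_right (le_max_right _ _) (hf0 _)
      _ ≤ max 1 C₀ * (D * f ((1 + 1 / 2) / 2)) :=
          mul_le_mul_of_nonneg_left (hdoubling _ ⟨le_rfl, by norm_num⟩) hmax
      _ ≤ max 1 C₀ * D * f ((1 + r) / 2) := by
          rw [mul_assoc]
          exact mul_le_mul_of_nonneg_left
            (mul_le_mul_of_nonneg_left (hf (by linarith)) hD) hmax

end Doubling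

theorem stmt_10_general (ω : Measure ℝ) [IsFiniteMeasure ω] (C₀ C : ℝ) (hC : 0 < C)
    (hcero : (ω (Ico (0 : ℝ) 1)).toReal ≤ C₀ * (ω (Ico (1 / 2 : ℝ) 1)).toReal)
    (h : ∀ r : ℝ, 1 / 2 ≤ r → r < 1 →
      (ω (Ico r 1)).toReal * (1 - r) ≤ C * ∫ s in Ico r 1, (s - r) ∂ω) :
    ∃ C' : ℝ, 0 < C' ∧ ∀ r : ℝ, 0 ≤ r → r < 1 →
      (ω (Ico r 1)).toReal ≤ C' * (ω (Ico ((1 + r) / 2) 1)).toReal := by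
  have htail := antitone_measureReal_Ico (μ := ω) 1
  obtain ⟨n, hn⟩ := htail.exists_doubling_of_le_mul_contract (K := 2 * C + 1)
    (q := 2 * C / (2 * C + 1)) (by positivity) (by positivity)
    ((div_lt_one (by positivity)).2 (by linarith))
    fun r hr => measureReal_Ico_le_mul_of_le_integral hC hr.2 (h r hr.1 hr.2)
  refine ⟨max 1 C₀ * (2 * C + 1) ^ n, by positivity, fun r hr0 hr1 => ?_⟩
  exact htail.doubling_Ico_zero_one (fun _ => measureReal_nonneg) (by positivity) hcero hn r
    ⟨hr0, hr1⟩

theorem stmt_10 (ω : Measure ℝ) [IsFiniteMeasure ω] (C₀ C : ℝ) (hC₀ : 0 < C₀) (hC : 0 < C)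
    (hcero : (ω (Ico (0 : ℝ) 1)).toReal ≤ C₀ * (ω (Ico (1 / 2 : ℝ) 1)).toReal)
    (h : ∀ r : ℝ, 1 / 2 ≤ r → r < 1 →
      (ω (Ico r 1)).toReal * (1 - r) ≤ C * ∫ s in Ico r 1, (s - r) ∂ω) :
    ∃ C' : ℝ, 0 < C' ∧ ∀ r : ℝ, 0 ≤ r → r < 1 →
      (ω (Ico r 1)).toReal ≤ C' * (ω (Ico ((1 + r) / 2) 1)).toReal :=
  stmt_10_general ω C₀ C hC hcero h
end

section
/- Let ω be a finite positive Borel measure on [0,1) with ω̂ doubling, let K > 1 be sufficiently large, and define ρ_n ∈ [0,1) by ω̂(ρ_n) = ω̂(0)·K^{-n} (assuming ω̂ is continuous and strictly decreasing so ρ_n is well defined). Then there exists a constant C > 1 such that 1 - ρ_n ≥ C·(1 - ρ_{n+1}) for all n ≥ 0. -/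
open MeasureTheory Set

theorem stmt_12 (ω : Measure ℝ) [IsFiniteMeasure ω] (C₀ : ℝ) (hC₀ : 1 ≤ C₀)
    (hdoub : ∀ r : ℝ, 0 ≤ r → r < 1 →
      (ω (Ico r 1)).toReal ≤ C₀ * (ω (Ico ((1 + r) / 2) 1)).toReal)
    (hcont : ContinuousOn (fun r : ℝ => (ω (Ico r 1)).toReal) (Ico (0 : ℝ) 1))
    (hanti : StrictAntiOn (fun r : ℝ => (ω (Ico r 1)).toReal) (Ico (0 : ℝ) 1)) :
    ∃ K₀ : ℝ, 1 < K₀ ∧ ∀ K : ℝ, K₀ ≤ K → ∀ ρ : ℕ → ℝ,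
      (∀ n : ℕ, ρ n ∈ Ico (0 : ℝ) 1) →
      (∀ n : ℕ, (ω (Ico (ρ n) 1)).toReal = (ω (Ico (0 : ℝ) 1)).toReal * K ^ (-(n : ℝ))) →
      ∃ c : ℝ, 1 < c ∧ ∀ n : ℕ, c * (1 - ρ (n + 1)) ≤ 1 - ρ n := by
  refine ⟨C₀ + 1, by linarith, ?_⟩
  intro K hK ρ hmem hval
  refine ⟨2, one_lt_two, ?_⟩
  intro n
  have hK1 : (1:ℝ) < K := by linarith
  have hKpos : (0:ℝ) < K := by linarith
  set f : ℝ → ℝ := fun r => (ω (Ico r 1)).toReal with hf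
  have hf0pos : 0 < f 0 := by
    have h1 : f (1/2) < f 0 :=
      hanti (by constructor <;> norm_num) (by constructor <;> norm_num) (by norm_num)
    have h2 : 0 ≤ f (1/2) := ENNReal.toReal_nonneg
    linarith
  have hfn_pos : 0 < f (ρ n) := by
    have := hval n
    simp only [hf] at this ⊢
    rw [this]
    have : (0:ℝ) < K ^ (-(n:ℝ)) := Real.rpow_pos_of_pos hKpos _
    positivity
  obtain ⟨hρ0, hρ1⟩ := hmem n
  have hmid : (1 + ρ n)/2 ∈ Ico (0:ℝ) 1 := ⟨by linarith, by linarith⟩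
  have hmid_pos : 0 < f ((1 + ρ n)/2) := by
    have hd := hdoub (ρ n) hρ0 hρ1
    nlinarith
  have hstep : f (ρ (n+1)) < f ((1 + ρ n)/2) := by
    have h1 : f (ρ (n+1)) = f (ρ n) / K := by
      simp only [hf]
      rw [hval n, hval (n+1)]
      push_cast
      rw [show -((n:ℝ)+1) = -(n:ℝ) - 1 by ring, Real.rpow_sub hKpos, Real.rpow_one]
      ring
    have hd := hdoub (ρ n) hρ0 hρ1
    rw [h1, div_lt_iff₀ hKpos]
    nlinarith
  have hgt : (1 + ρ n)/2 < ρ (n+1) := by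
    by_contra h
    push_neg at h
    have := hanti.antitoneOn (hmem (n+1)) hmid h
    simp only [hf] at this hstep
    linarith
  linarith
end

section
/- Let ω be a weight on the unit disc that is invariant, i.e. for each r ∈ (0,1) there exists C(r) ≥ 1 such that C(r)^{-1}·ω(a) ≤ ω(z) ≤ C(r)·ω(a) whenever z lies in the pseudohyperbolic disc Δ(a,r). Then there exists a function C : 𝔻 → [1,∞) of the form C(z) = C₀·((1+|z|)/(1-|z|))^{(log C₀)/2} such that ω(u) ≤ C(z)·ω(φ_u(z)) for all u, z ∈ 𝔻, and ∫_𝔻 log C(z) dA(z) < ∞. -/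
/-!
Take `C` to be the invariance constant for the radius `tanh 1`, i.e. hyperbolic distance `1`.
The hyperbolic segment from `0` to `z` has length `artanh ‖z‖`; cutting it into
`N = ⌊artanh ‖z‖⌋₊ + 1` equal pieces gives consecutive points at pseudohyperbolic distance
`< tanh 1`. As `φ_u` preserves pseudohyperbolic distance and `φ_u 0 = u`, applying invariance
along the image of this chain gives `ω u ≤ C ^ N ω (φ_u z)`, and
`C ^ N ≤ C · C ^ artanh ‖z‖ = C ((1 + ‖z‖) / (1 - ‖z‖)) ^ (log C / 2)`.
The logarithm of this bound is `log C + (log C / 2) (log (1 + ‖z‖) - log (1 - ‖z‖))`, a radial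
function that is integrable on the disc because `log` is integrable near `0`.
-/

open MeasureTheory Set Metric Real ComplexConjugate

noncomputable def mobius (a z : ℂ) : ℂ := (a - z) / (1 - conj a * z)

lemma mobius_zero_right (a : ℂ) : mobius a 0 = a := by simp [mobius]

lemma one_sub_conj_mul_ne_zero {a z : ℂ} (ha : ‖a‖ < 1) (hz : ‖z‖ < 1) :
    1 - conj a * z ≠ 0 := by
  intro h
  have h1 : ‖conj a * z‖ = 1 := by rw [← sub_eq_zero.mp h, norm_one]
  rw [norm_mul, RCLike.norm_conj] at h1
  nlinarith [norm_nonneg a, norm_nonneg z]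

lemma sq_norm_one_sub_conj_mul_sub_sq_norm_sub (a z : ℂ) :
    ‖1 - conj a * z‖ ^ 2 - ‖a - z‖ ^ 2 = (1 - ‖a‖ ^ 2) * (1 - ‖z‖ ^ 2) := by
  simp only [Complex.sq_norm, Complex.normSq_apply, Complex.sub_re, Complex.sub_im,
    Complex.mul_re, Complex.mul_im, Complex.one_re, Complex.one_im, Complex.conj_re,
    Complex.conj_im]
  ring

lemma norm_mobius_lt_one {a z : ℂ} (ha : ‖a‖ < 1) (hz : ‖z‖ < 1) : ‖mobius a z‖ < 1 := by
  rw [mobius, norm_div, div_lt_one (norm_pos_iff.2 (one_sub_conj_mul_ne_zero ha hz))]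
  have hpos : 0 < (1 - ‖a‖ ^ 2) * (1 - ‖z‖ ^ 2) := by
    apply mul_pos <;> nlinarith [norm_nonneg a, norm_nonneg z]
  have := sq_norm_one_sub_conj_mul_sub_sq_norm_sub a z
  exact lt_of_pow_lt_pow_left₀ 2 (norm_nonneg _) (by linarith)

lemma mobius_mobius {a p q : ℂ} (ha : ‖a‖ < 1) (hp : ‖p‖ < 1) (hq : ‖q‖ < 1) :
    mobius (mobius a p) (mobius a q) = -((1 - a * conj p) / (1 - conj a * p)) * mobius p q := by
  have hap := one_sub_conj_mul_ne_zero ha hp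
  have haq := one_sub_conj_mul_ne_zero ha hq
  have hpq := one_sub_conj_mul_ne_zero hp hq
  have haa := one_sub_conj_mul_ne_zero ha ha
  have hpa : 1 - a * conj p ≠ 0 := by
    simpa [mul_comm] using one_sub_conj_mul_ne_zero hp ha
  have hnum : mobius a p - mobius a q
      = (conj a * a - 1) * (p - q) / ((1 - conj a * p) * (1 - conj a * q)) := by
    rw [mobius, mobius, div_sub_div _ _ hap haq]
    ring
  have hden : 1 - conj (mobius a p) * mobius a q
      = (1 - conj a * a) * (1 - conj p * q) / ((1 - a * conj p) * (1 - conj a * q)) := by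
    rw [mobius, mobius, map_div₀, map_sub, map_sub, map_one, map_mul, Complex.conj_conj,
      div_mul_div_comm, one_sub_div (mul_ne_zero hpa haq)]
    ring
  rw [mobius, hnum, hden, mobius]
  field_simp
  ring

lemma norm_mobius_mobius {a p q : ℂ} (ha : ‖a‖ < 1) (hp : ‖p‖ < 1) (hq : ‖q‖ < 1) :
    ‖mobius (mobius a p) (mobius a q)‖ = ‖mobius p q‖ := by
  have hconj : 1 - a * conj p = conj (1 - conj a * p) := by simp
  rw [mobius_mobius ha hp hq, norm_mul, norm_neg, hconj, norm_div, RCLike.norm_conj,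
    div_self (norm_ne_zero_iff.2 (one_sub_conj_mul_ne_zero ha hp)), one_mul]

lemma norm_mobius_ofReal_mul {ζ : ℂ} (hζ : ‖ζ‖ = 1) (t s : ℝ) :
    ‖mobius (t * ζ) (s * ζ)‖ = |(t - s) / (1 - t * s)| := by
  have hζζ : conj ζ * ζ = 1 := by rw [Complex.conj_mul', hζ]; norm_num
  have : mobius (t * ζ) (s * ζ) = ((t - s) / (1 - t * s) : ℝ) * ζ := by
    rw [mobius, map_mul, Complex.conj_ofReal, mul_mul_mul_comm, mul_comm _ ζ, hζζ]
    push_cast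
    ring
  rw [this, norm_mul, hζ, mul_one, Complex.norm_real, Real.norm_eq_abs]

lemma Real.tanh_sub (x y : ℝ) : tanh (x - y) = (tanh x - tanh y) / (1 - tanh x * tanh y) := by
  have hx := cosh_pos x
  have hy := cosh_pos y
  have hxy := cosh_pos (x - y)
  rw [cosh_sub] at hxy
  simp only [tanh_eq_sinh_div_cosh, sinh_sub, cosh_sub]
  field_simp

lemma Real.strictMono_tanh : StrictMono tanh := fun x y h => by
  rwa [← artanh_lt_artanh_iff ⟨neg_one_lt_tanh x, tanh_lt_one x⟩
    ⟨neg_one_lt_tanh y, tanh_lt_one y⟩, artanh_tanh, artanh_tanh]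

lemma Real.abs_tanh_lt_tanh {x y : ℝ} (h : |x| < y) : |tanh x| < tanh y := by
  rw [abs_lt, ← tanh_neg]
  exact ⟨strictMono_tanh (by linarith [neg_abs_le x]), strictMono_tanh ((le_abs_self x).trans_lt h)⟩

lemma pow_floor_artanh_add_one_le {C t : ℝ} (hC : 1 ≤ C) (ht0 : 0 ≤ t) (ht1 : t < 1) :
    C ^ (⌊artanh t⌋₊ + 1) ≤ C * ((1 + t) / (1 - t)) ^ (Real.log C / 2) := by
  have hC0 : 0 < C := by linarith
  have hR : 0 < (1 + t) / (1 - t) := div_pos (by linarith) (by linarith)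
  calc C ^ (⌊artanh t⌋₊ + 1) = C ^ ((⌊artanh t⌋₊ : ℝ) + 1) := by norm_cast
    _ ≤ C ^ (artanh t + 1) := by
      gcongr
      exact Nat.floor_le (artanh_nonneg ht0)
    _ = C * ((1 + t) / (1 - t)) ^ (Real.log C / 2) := by
      rw [rpow_add hC0, rpow_one, mul_comm, artanh_eq_half_log ⟨by linarith, ht1.le⟩,
        rpow_def_of_pos hC0, rpow_def_of_pos hR]
      ring_nf

lemma exists_chain_norm_mobius_lt_tanh {z : ℂ} (hz : ‖z‖ < 1) {δ : ℝ} {N : ℕ}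
    (hN : artanh ‖z‖ < N * δ) :
    ∃ p : ℕ → ℂ, p 0 = 0 ∧ p N = z ∧ (∀ k, ‖p k‖ < 1) ∧
      ∀ k, ‖mobius (p (k + 1)) (p k)‖ < tanh δ := by
  have hd := artanh_nonneg (norm_nonneg z)
  have hNpos : (0 : ℝ) < N := by
    refine (Nat.cast_nonneg N).lt_of_ne' fun h => ?_
    rw [h, zero_mul] at hN
    exact hd.not_gt hN
  set c := artanh ‖z‖ / N
  have hζ : ‖Complex.exp (z.arg * Complex.I)‖ = 1 := Complex.norm_exp_ofReal_mul_I _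
  refine ⟨fun k => (tanh (k * c) : ℂ) * Complex.exp (z.arg * Complex.I), ?_, ?_, ?_, ?_⟩
  · simp
  · simp only [c]
    rw [mul_div_cancel₀ _ hNpos.ne', tanh_artanh ⟨by linarith [norm_nonneg z], hz⟩,
      Complex.norm_mul_exp_arg_mul_I]
  · intro k
    rw [norm_mul, hζ, mul_one, Complex.norm_real, Real.norm_eq_abs]
    exact abs_tanh_lt_one _
  · intro k
    rw [norm_mobius_ofReal_mul hζ, ← tanh_sub]
    push_cast
    rw [add_mul, one_mul, add_sub_cancel_left]
    refine abs_tanh_lt_tanh ?_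
    rw [abs_of_nonneg (div_nonneg hd hNpos.le), div_lt_iff₀ hNpos]
    linarith

lemma le_pow_mul_of_le_mul_succ {α : Type*} [Semiring α] [PartialOrder α] [IsOrderedRing α]
    {f : ℕ → α} {C : α} (hC : 0 ≤ C) (h : ∀ k, f k ≤ C * f (k + 1)) (n : ℕ) :
    f 0 ≤ C ^ n * f n := by
  induction n with
  | zero => simp
  | succ n ih =>
    calc f 0 ≤ C ^ n * f n := ih
      _ ≤ C ^ n * (C * f (n + 1)) := mul_le_mul_of_nonneg_left (h n) (pow_nonneg hC n)
      _ = C ^ (n + 1) * f (n + 1) := by rw [pow_succ, mul_assoc]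

lemma weight_le_pow_mul_weight_mobius {ω : ℂ → ℝ} {C δ : ℝ} (hC : 0 ≤ C)
    (hω : ∀ a z, a ∈ ball (0 : ℂ) 1 → z ∈ ball (0 : ℂ) 1 → ‖mobius a z‖ < tanh δ →
      ω z ≤ C * ω a)
    {u z : ℂ} (hu : u ∈ ball (0 : ℂ) 1) (hz : z ∈ ball (0 : ℂ) 1) {N : ℕ}
    (hN : artanh ‖z‖ < N * δ) :
    ω u ≤ C ^ N * ω (mobius u z) := by
  rw [mem_ball_zero_iff] at hu hz
  obtain ⟨p, hp0, hpN, hp1, hstep⟩ := exists_chain_norm_mobius_lt_tanh hz hN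
  have hball k : mobius u (p k) ∈ ball (0 : ℂ) 1 :=
    mem_ball_zero_iff.2 (norm_mobius_lt_one hu (hp1 k))
  have hchain k : ω (mobius u (p k)) ≤ C * ω (mobius u (p (k + 1))) :=
    hω _ _ (hball (k + 1)) (hball k) ((norm_mobius_mobius hu (hp1 _) (hp1 _)).trans_lt (hstep k))
  simpa only [hp0, hpN, mobius_zero_right] using
    le_pow_mul_of_le_mul_succ (f := fun k => ω (mobius u (p k))) hC hchain N

lemma integrableOn_unitBall_comp_norm {E F : Type*} [NormedAddCommGroup E] [NormedSpace ℝ E]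
    [Nontrivial E] [FiniteDimensional ℝ E] [MeasurableSpace E] [BorelSpace E]
    [NormedAddCommGroup F] [NormedSpace ℝ F] (μ : Measure E) [μ.IsAddHaarMeasure]
    {g : ℝ → F} (hg : IntervalIntegrable g volume 0 1) :
    IntegrableOn (fun x => g ‖x‖) (ball 0 1) μ := by
  have hpow : IntegrableOn (fun y : ℝ => y ^ (Module.finrank ℝ E - 1) • g y) (Ioc 0 1) :=
    (intervalIntegrable_iff_integrableOn_Ioc_of_le zero_le_one).1
      (hg.continuousOn_smul (continuous_pow _).continuousOn)
  have hind : (ball (0 : E) 1).indicator (fun x => g ‖x‖) = fun x => (Iio 1).indicator g ‖x‖ := by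
    ext x; simp [indicator]
  rw [← integrable_indicator_iff measurableSet_ball, hind, integrable_fun_norm_addHaar]
  simp_rw [← indicator_smul]
  rw [integrableOn_indicator_iff measurableSet_Iio, inter_comm, Ioi_inter_Iio]
  exact hpow.mono_set Ioo_subset_Ioc_self

lemma integrableOn_unitBall_log_mul_rpow {E : Type*} [NormedAddCommGroup E] [NormedSpace ℝ E]
    [Nontrivial E] [FiniteDimensional ℝ E] [MeasurableSpace E] [BorelSpace E]
    (μ : Measure E) [μ.IsAddHaarMeasure] {c : ℝ} (hc : 0 < c) (e : ℝ) :
    IntegrableOn (fun x : E => Real.log (c * ((1 + ‖x‖) / (1 - ‖x‖)) ^ e)) (ball 0 1) μ := by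
  have hg : IntervalIntegrable (fun y => Real.log c + e * Real.log (1 + y) - e * Real.log (1 - y))
      volume 0 1 := by
    refine (intervalIntegrable_const.add (IntervalIntegrable.const_mul ?_ e)).sub
      (IntervalIntegrable.const_mul ?_ e)
    · simpa using (intervalIntegral.intervalIntegrable_log' (a := 1) (b := 1 + 1)).comp_add_left 1
    · simpa using (intervalIntegral.intervalIntegrable_log' (a := 1) (b := 0)).comp_sub_left 1
  refine (integrableOn_unitBall_comp_norm μ hg).congr_fun (fun x hx => ?_) measurableSet_ball
  rw [mem_ball_zero_iff] at hx
  have h1 : 0 < 1 + ‖x‖ := by linarith [norm_nonneg x]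
  have h2 : 0 < 1 - ‖x‖ := by linarith
  rw [Real.log_mul hc.ne' (rpow_pos_of_pos (div_pos h1 h2) e).ne', Real.log_rpow (div_pos h1 h2),
    Real.log_div h1.ne' h2.ne']
  ring

theorem stmt_14 (ω : ℂ → ℝ) (hωpos : ∀ z ∈ Metric.ball (0 : ℂ) 1, 0 < ω z)
    (hinv : ∀ r : ℝ, 0 < r → r < 1 → ∃ C : ℝ, 1 ≤ C ∧ ∀ a z : ℂ,
      a ∈ Metric.ball (0 : ℂ) 1 → z ∈ Metric.ball (0 : ℂ) 1 →
      ‖(a - z) / (1 - (starRingEnd ℂ) a * z)‖ < r →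
      C⁻¹ * ω a ≤ ω z ∧ ω z ≤ C * ω a) :
    ∃ C₀ : ℝ, 1 ≤ C₀ ∧
      (∀ u z : ℂ, u ∈ Metric.ball (0 : ℂ) 1 → z ∈ Metric.ball (0 : ℂ) 1 →
        ω u ≤ (C₀ * ((1 + ‖z‖) / (1 - ‖z‖)) ^ (Real.log C₀ / 2)) *
          ω ((u - z) / (1 - (starRingEnd ℂ) u * z))) ∧
      IntegrableOn
        (fun z : ℂ => Real.log (C₀ * ((1 + ‖z‖) / (1 - ‖z‖)) ^ (Real.log C₀ / 2)))
        (Metric.ball (0 : ℂ) 1) := by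
  have htanh_one_pos : 0 < tanh 1 := tanh_zero ▸ strictMono_tanh zero_lt_one
  obtain ⟨C, hC1, hC⟩ := hinv (tanh 1) htanh_one_pos (tanh_lt_one 1)
  refine ⟨C, hC1, fun u z hu hz => ?_,
    integrableOn_unitBall_log_mul_rpow volume (by linarith) _⟩
  have hN : artanh ‖z‖ < ((⌊artanh ‖z‖⌋₊ + 1 : ℕ) : ℝ) * 1 := by
    simpa using Nat.lt_floor_add_one (artanh ‖z‖)
  have hz' : ‖z‖ < 1 := mem_ball_zero_iff.1 hz
  have hωz : 0 < ω (mobius u z) :=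
    hωpos _ (mem_ball_zero_iff.2 (norm_mobius_lt_one (mem_ball_zero_iff.1 hu) hz'))
  calc ω u ≤ C ^ (⌊artanh ‖z‖⌋₊ + 1) * ω (mobius u z) :=
        weight_le_pow_mul_weight_mobius (by linarith) (fun a z ha hz h => (hC a z ha hz h).2)
          hu hz hN
    _ ≤ _ := mul_le_mul_of_nonneg_right (pow_floor_artanh_add_one_le hC1 (norm_nonneg z) hz') hωz.le
end
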